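/- arXiv:1907.07278 — 15 statements merged into one kernel-verified Lean document; each statement's English description precedes it below -/
import Mathlib

section
/- Let X be a real Banach space, p : X → ]−∞,∞] a proper convex function, s : X → ]−∞,∞] lower semicontinuous with s ≤ p on X and s(0) > 0. Then there exists K ∈ [0,∞) such that p(x) + K‖x‖ ≥ 0 for all x ∈ X. -/
open Filter

set_option maxHeartbeats 1000000

theorem stmt0 {X : Type*} [NormedAddCommGroup X] [NormedSpace ℝ X] [CompleteSpace X]
    [Nontrivial X]
    (p s : X → EReal)
    (hpbot : ∀ x, p x ≠ ⊥) (hsbot : ∀ x, s x ≠ ⊥)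
    (hproper : ∃ x, p x ≠ ⊤)
    (hconv : ∀ x y : X, ∀ a b : ℝ, 0 ≤ a → 0 ≤ b → a + b = 1 →
      p (a • x + b • y) ≤ (a : EReal) * p x + (b : EReal) * p y)
    (hlsc : LowerSemicontinuous s)
    (hsle : ∀ x, s x ≤ p x)
    (hs0 : 0 < s 0) :
    ∃ K : ℝ, 0 ≤ K ∧ ∀ x : X, 0 ≤ p x + ((K * ‖x‖ : ℝ) : EReal) := by
  by_contra hcon
  push_neg at hcon
  obtain ⟨x₀, hx₀⟩ := hproper
  set M := (p x₀).toReal with hMdef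
  have hM : p x₀ = (M : EReal) := (EReal.coe_toReal hx₀ (hpbot x₀)).symm
  obtain ⟨r, hr0, hball⟩ : ∃ r > 0, ∀ x : X, ‖x‖ < r → 0 < s x := by
    have h := hlsc 0 0 hs0
    rw [Metric.eventually_nhds_iff] at h
    obtain ⟨ε, hε, h⟩ := h
    exact ⟨ε, hε, fun x hx => h (by simpa [dist_zero_right] using hx)⟩
  have hpball : ∀ x : X, ‖x‖ < r → 0 < p x := fun x hx =>
    lt_of_lt_of_le (hball x hx) (hsle x)
  have hbad : ∀ K : ℝ, 0 ≤ K →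
      ∃ x : X, ∃ v : ℝ, p x = (v : EReal) ∧ r ≤ ‖x‖ ∧ v < -(K * ‖x‖) := by
    intro K hK
    obtain ⟨x, hx⟩ := hcon K hK
    have hxtop : p x ≠ ⊤ := by
      intro h
      rw [h, EReal.top_add_coe] at hx
      exact not_top_lt hx
    have hv : p x = ((p x).toReal : EReal) := (EReal.coe_toReal hxtop (hpbot x)).symm
    set v := (p x).toReal with hvdef
    have hvlt : v + K * ‖x‖ < 0 := by
      rw [hv] at hx
      exact_mod_cast hx
    refine ⟨x, v, hv, ?_, by linarith⟩
    by_contra hrx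
    push_neg at hrx
    have h1 := hpball x hrx
    rw [hv] at h1
    have h2 : (0:ℝ) < v := by exact_mod_cast h1
    nlinarith [mul_nonneg hK (norm_nonneg x)]
  have key : ∀ (z : X) (U ε T : ℝ), 0 < ε → p z ≤ (U : EReal) →
      ∃ z' : X, ‖z' - z‖ ≤ ε ∧ p z' ≤ (T : EReal) := by
    intro z U ε T hε hzU
    have hztop : p z ≠ ⊤ := fun h => by rw [h] at hzU; exact absurd hzU (by simp)
    have hw : p z = ((p z).toReal : EReal) := (EReal.coe_toReal hztop (hpbot z)).symm
    set w := (p z).toReal with hwdef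
    have hwU : w ≤ U := by rw [hw] at hzU; exact_mod_cast hzU
    set A : ℝ := |U| + |T| + 1 with hAdef
    set K : ℝ := ((|T| + 1) * ε + A * (r + ‖z‖)) / (ε * r) with hKdef
    have hrz : (0:ℝ) < r + ‖z‖ := by positivity
    have hK0 : 0 ≤ K := by
      rw [hKdef, hAdef]; positivity
    have hKprod : K * (ε * r) = (|T| + 1) * ε + A * (r + ‖z‖) := by
      rw [hKdef]; field_simp
    have hA0 : (0:ℝ) ≤ A := by rw [hAdef]; positivity
    have hKer : A * (r + ‖z‖) ≤ K * (ε * r) := by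
      have h0 : 0 ≤ (|T| + 1) * ε := by positivity
      linarith
    have hKr : |T| + 1 ≤ K * r := by
      have h0 : 0 ≤ A * (r + ‖z‖) := mul_nonneg hA0 hrz.le
      nlinarith [hKprod, hε]
    obtain ⟨x, v, hpx, hrx, hvx⟩ := hbad K hK0
    have hKx : K * r ≤ K * ‖x‖ := mul_le_mul_of_nonneg_left hrx hK0
    by_cases hdc : ‖x - z‖ ≤ ε
    · refine ⟨x, hdc, ?_⟩
      rw [hpx]
      have hvT : v ≤ T := by
        have := neg_abs_le T
        linarith
      exact_mod_cast hvT
    · push_neg at hdc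
      set d := ‖x - z‖ with hddef
      have hd0 : (0:ℝ) < d := lt_trans hε hdc
      set t := ε / d with htdef
      have ht0 : 0 < t := div_pos hε hd0
      have ht1 : t < 1 := (div_lt_one hd0).2 hdc
      have htd : t * d = ε := div_mul_cancel₀ _ (ne_of_gt hd0)
      refine ⟨z + t • (x - z), ?_, ?_⟩
      · have h1 : z + t • (x - z) - z = t • (x - z) := by abel
        rw [h1, norm_smul, Real.norm_eq_abs, abs_of_pos ht0]
        exact htd.le
      · have hcomb := hconv z x (1 - t) t (by linarith) ht0.le (by ring)
        have hpt : (1 - t) • z + t • x = z + t • (x - z) := by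
          rw [smul_sub, sub_smul, one_smul]; abel
        rw [hpt, hw, hpx] at hcomb
        have hcoe : ((1 - t : ℝ) : EReal) * ((w : ℝ) : EReal) + ((t : ℝ) : EReal) * ((v : ℝ) : EReal)
            = (((1 - t) * w + t * v : ℝ) : EReal) := by norm_cast
        rw [hcoe] at hcomb
        refine le_trans hcomb ?_
        rw [EReal.coe_le_coe_iff]
        have hxd : d ≤ ‖x‖ + ‖z‖ := norm_sub_le x z
        have h1 : r * d ≤ ‖x‖ * (r + ‖z‖) := by
          nlinarith [mul_le_mul_of_nonneg_left hxd hr0.le,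
            mul_le_mul_of_nonneg_left hrx (norm_nonneg z)]
        have h2 : ε * r ≤ t * ‖x‖ * (r + ‖z‖) := by
          have he : t * ‖x‖ * (r + ‖z‖) = ε * (‖x‖ * (r + ‖z‖)) / d := by
            rw [htdef]; field_simp
          rw [he, le_div_iff₀ hd0]
          nlinarith [mul_le_mul_of_nonneg_left h1 hε.le]
        have h3 : A ≤ K * (t * ‖x‖) := by
          have h4 := mul_le_mul_of_nonneg_left h2 hK0
          nlinarith [hKer, hrz]
        have h4 : t * v ≤ -A := by
          have hv' : v ≤ -(K * ‖x‖) := hvx.le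
          have e1 : t * v ≤ t * -(K * ‖x‖) := mul_le_mul_of_nonneg_left hv' ht0.le
          have e2 : t * -(K * ‖x‖) = -(K * (t * ‖x‖)) := by ring
          linarith [e1, e2.le, e2.ge, h3]
        have h5 : (1 - t) * w ≤ |U| := by
          nlinarith [le_abs_self U, abs_nonneg U]
        have h6 := neg_abs_le T
        have h7 := abs_nonneg T
        linarith
  have key2 : ∀ (n : ℕ) (z : X), p z ≤ ((M - (n : ℝ) : ℝ) : EReal) →
      ∃ z' : X, ‖z' - z‖ ≤ (1/2 : ℝ)^n ∧ p z' ≤ ((M - ((n+1 : ℕ) : ℝ) : ℝ) : EReal) :=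
    fun n z hz => key z (M - (n : ℝ)) ((1/2 : ℝ)^n) (M - ((n+1 : ℕ) : ℝ)) (by positivity) hz
  let g : (n : ℕ) → {x : X // p x ≤ ((M - (n : ℝ) : ℝ) : EReal)} := fun n =>
    Nat.rec (motive := fun n => {x : X // p x ≤ ((M - (n : ℝ) : ℝ) : EReal)})
      ⟨x₀, by simpa using hM.le⟩
      (fun n ih => ⟨(key2 n ih.1 ih.2).choose, (key2 n ih.1 ih.2).choose_spec.2⟩) n
  have gadj : ∀ n, ‖(g (n+1)).1 - (g n).1‖ ≤ (1/2 : ℝ)^n :=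
    fun n => (key2 n (g n).1 (g n).2).choose_spec.1
  have hcauchy : CauchySeq (fun n => (g n).1) := by
    apply cauchySeq_of_le_geometric (1/2 : ℝ) 1 (by norm_num)
    intro n
    rw [dist_eq_norm, norm_sub_rev, one_mul]
    exact gadj n
  obtain ⟨zs, hzs⟩ := cauchySeq_tendsto_of_complete hcauchy
  have hne : (⊥ : EReal) < s zs := bot_lt_iff_ne_bot.2 (hsbot zs)
  obtain ⟨y, -, hy2⟩ := EReal.exists_between_coe_real hne
  have hev := hzs.eventually (hlsc zs y hy2)
  obtain ⟨N, hN⟩ := exists_nat_gt (M - y)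
  obtain ⟨n, hn1, hn2⟩ := (hev.and (eventually_ge_atTop N)).exists
  have hle : s ((g n).1) ≤ ((M - (n : ℝ) : ℝ) : EReal) := le_trans (hsle _) (g n).2
  have hlt : (y : EReal) < ((M - (n : ℝ) : ℝ) : EReal) := lt_of_lt_of_le hn1 hle
  rw [EReal.coe_lt_coe_iff] at hlt
  have hNn : (N : ℝ) ≤ (n : ℝ) := Nat.cast_le.2 hn2
  linarith
end

section
/- Let X be a real Banach space, p : X → ]−∞,∞] a proper convex function, s : X → ]−∞,∞] lower semicontinuous with s ≤ p on X and s(0) > 0. Then there exists x* ∈ X* with p*(x*) ≤ 0, where p*(x*) = sup_{x ∈ X} [⟨x, x*⟩ − p(x)] is the Fenchel conjugate. -/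
/-!
The closure of the epigraph of `p` lies in the epigraph of the lower semicontinuous `s`, so it
misses `(0, 0)` (as `s 0 > 0`) and a point `(x₀, m)` below `s x₀` with `x₀ ∈ dom p`. Separating
the latter gives a continuous affine minorant `ℓ + γ` of `p`, the former a functional with
`u < F y + c v` on the epigraph, where `c ≥ 0` and `u > 0`. A positive combination of the two
inequalities, weighted so that the constant term becomes nonnegative, yields `x' ≤ p` with `x'`
linear, i.e. `p* x' ≤ 0`.
-/

section RealEpigraph

variable {X : Type*}

def realEpigraph (p : X → EReal) : Set (X × ℝ) := {q | p q.1 ≤ q.2}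

theorem le_of_forall_mem_realEpigraph {p : X → EReal} {f : X → ℝ}
    (hf : ∀ q ∈ realEpigraph p, f q.1 ≤ q.2) (y : X) : (f y : EReal) ≤ p y :=
  EReal.le_of_forall_lt_iff_le.1 fun v hv => EReal.coe_le_coe_iff.2 (hf (y, v) hv.le)

theorem closure_realEpigraph_subset [TopologicalSpace X] {p s : X → EReal}
    (hs : LowerSemicontinuous s) (hsp : ∀ x, s x ≤ p x) :
    closure (realEpigraph p) ⊆ realEpigraph s := by
  have hclosed : IsClosed (realEpigraph s) :=
    hs.isClosed_epigraph.preimage (continuous_fst.prodMk (continuous_coe_real_ereal.comp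
      continuous_snd))
  exact closure_minimal (fun q hq => (hsp q.1).trans hq) hclosed

theorem convex_realEpigraph [AddCommGroup X] [Module ℝ X] {p : X → EReal}
    (hconv : ∀ x y : X, ∀ a b : ℝ, 0 ≤ a → 0 ≤ b → a + b = 1 →
      p (a • x + b • y) ≤ (a : EReal) * p x + (b : EReal) * p y) :
    Convex ℝ (realEpigraph p) := by
  rintro ⟨x, r⟩ hx ⟨y, t⟩ hy a b ha hb hab
  calc p (a • x + b • y) ≤ (a : EReal) * p x + (b : EReal) * p y := hconv x y a b ha hb hab
    _ ≤ (a : EReal) * r + (b : EReal) * t := by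
        gcongr
        exacts [hx, hy]
    _ = ((a • (x, r) + b • (y, t)).2 : ℝ) := by simp

section Separation

variable [NormedAddCommGroup X] [NormedSpace ℝ X] {p : X → EReal}

/-- `c ≥ 0` because the epigraph is closed upwards. -/
theorem exists_separation_of_notMem_closure_realEpigraph (hE : Convex ℝ (realEpigraph p))
    {x₀ : X} {r : ℝ} (hr : (x₀, r) ∈ realEpigraph p) {z : X} {m : ℝ}
    (hzm : (z, m) ∉ closure (realEpigraph p)) :
    ∃ (F : StrongDual ℝ X) (c u : ℝ), 0 ≤ c ∧ F z + m * c < u ∧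
      ∀ q ∈ realEpigraph p, u < F q.1 + q.2 * c := by
  obtain ⟨f, u, hfz, hfE⟩ := geometric_hahn_banach_point_closed hE.closure isClosed_closure hzm
  set F : StrongDual ℝ X := f.comp (.inl ℝ X ℝ)
  set c := f (0, 1)
  have hf : ∀ q : X × ℝ, f q = F q.1 + q.2 * c := fun q => by
    rw [show q = (q.1, 0) + q.2 • ((0 : X), (1 : ℝ)) by ext <;> simp, map_add, map_smul]
    simp [F, c, smul_eq_mul]
  have hfE' : ∀ q ∈ realEpigraph p, u < F q.1 + q.2 * c :=
    fun q hq => hf q ▸ hfE q (subset_closure hq)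
  refine ⟨F, c, u, ?_, hf (z, m) ▸ hfz, hfE'⟩
  by_contra! hc
  set t := max r ((u - F x₀) / c)
  have hup : u < F x₀ + t * c := hfE' (x₀, t) (hr.trans (EReal.coe_le_coe_iff.2 (le_max_left _ _)))
  have hdown : t * c ≤ u - F x₀ := (div_le_iff_of_neg hc).1 (le_max_right _ _)
  linarith

theorem exists_affine_minorant_of_notMem_closure_realEpigraph (hE : Convex ℝ (realEpigraph p))
    {x₀ : X} {r m : ℝ} (hr : (x₀, r) ∈ realEpigraph p)
    (hm : (x₀, m) ∉ closure (realEpigraph p)) :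
    ∃ (ℓ : StrongDual ℝ X) (γ : ℝ), ∀ q ∈ realEpigraph p, ℓ q.1 + γ ≤ q.2 := by
  obtain ⟨G, d, u, hd_nonneg, hGm, hGE⟩ :=
    exists_separation_of_notMem_closure_realEpigraph hE hr hm
  have hd : 0 < d := by
    refine hd_nonneg.lt_of_ne fun hd0 => ?_
    have hGr := hGE _ hr
    simp only [← hd0, mul_zero, add_zero] at hGm hGr
    linarith
  refine ⟨-d⁻¹ • G, u / d, fun q hq => ?_⟩
  simp only [smul_apply, smul_eq_mul, neg_mul, ← div_eq_inv_mul]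
  rw [neg_add_eq_sub, ← sub_div, div_le_iff₀ hd]
  linarith [hGE q hq]

end Separation

/-- Combining an affine minorant `ℓ + γ` with `u < F y + c v`, `u > 0`: with `λ = |γ| / u` one
gets `(ℓ - λ F) y + (γ + |γ|) ≤ (1 + λ c) v`, and the constant term is nonnegative. -/
theorem exists_linear_minorant_of_affine_minorant [TopologicalSpace X] [AddCommGroup X]
    [Module ℝ X]
    {E : Set (X × ℝ)} (ℓ F : StrongDual ℝ X) {γ c u : ℝ} (hc : 0 ≤ c) (hu : 0 < u)
    (hℓ : ∀ q ∈ E, ℓ q.1 + γ ≤ q.2) (hF : ∀ q ∈ E, u < F q.1 + q.2 * c) :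
    ∃ x' : StrongDual ℝ X, ∀ q ∈ E, x' q.1 ≤ q.2 := by
  set k := |γ| / u
  have hk : 0 ≤ k := by positivity
  have hpos : 0 < 1 + k * c := by positivity
  refine ⟨(1 + k * c)⁻¹ • (ℓ - k • F), fun q hq => ?_⟩
  have h1 := hℓ q hq
  have h2 : k * u ≤ k * (F q.1 + q.2 * c) := mul_le_mul_of_nonneg_left (hF q hq).le hk
  have h3 : k * u = |γ| := div_mul_cancel₀ _ hu.ne'
  have h4 := neg_abs_le γ
  simp only [smul_apply, sub_apply, smul_eq_mul, ← div_eq_inv_mul]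
  rw [div_le_iff₀' hpos]
  nlinarith

end RealEpigraph

theorem stmt1_general {X : Type*} [NormedAddCommGroup X] [NormedSpace ℝ X]
    (p s : X → EReal)
    (hsbot : ∀ x, s x ≠ ⊥)
    (hproper : ∃ x, p x ≠ ⊤)
    (hconv : ∀ x y : X, ∀ a b : ℝ, 0 ≤ a → 0 ≤ b → a + b = 1 →
      p (a • x + b • y) ≤ (a : EReal) * p x + (b : EReal) * p y)
    (hlsc : LowerSemicontinuous s)
    (hsle : ∀ x, s x ≤ p x)
    (hs0 : 0 < s 0) :
    ∃ x' : StrongDual ℝ X, (⨆ x : X, (((x' x : ℝ) : EReal) - p x)) ≤ 0 := by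
  have hE := convex_realEpigraph hconv
  have hcl := closure_realEpigraph_subset hlsc hsle
  obtain ⟨x₀, hx₀⟩ := hproper
  obtain ⟨r, hr, -⟩ := EReal.lt_iff_exists_real_btwn.1 (lt_top_iff_ne_top.2 hx₀)
  obtain ⟨m, -, hm⟩ := EReal.lt_iff_exists_real_btwn.1 (bot_lt_iff_ne_bot.2 (hsbot x₀))
  have hr : (x₀, r) ∈ realEpigraph p := hr.le
  obtain ⟨ℓ, γ, hℓ⟩ := exists_affine_minorant_of_notMem_closure_realEpigraph hE hr
    fun h => (hcl h).not_gt hm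
  obtain ⟨F, c, u, hc, hu, hF⟩ := exists_separation_of_notMem_closure_realEpigraph hE hr
    (z := 0) (m := 0) fun h => (hcl h).not_gt (by exact_mod_cast hs0)
  obtain ⟨x', hx'⟩ := exists_linear_minorant_of_affine_minorant ℓ F hc (by simpa using hu) hℓ hF
  exact ⟨x', iSup_le fun y => EReal.sub_nonpos.2 (le_of_forall_mem_realEpigraph hx' y)⟩

theorem stmt1 {X : Type*} [NormedAddCommGroup X] [NormedSpace ℝ X] [CompleteSpace X]
    [Nontrivial X]
    (p s : X → EReal)
    (hpbot : ∀ x, p x ≠ ⊥) (hsbot : ∀ x, s x ≠ ⊥)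
    (hproper : ∃ x, p x ≠ ⊤)
    (hconv : ∀ x y : X, ∀ a b : ℝ, 0 ≤ a → 0 ≤ b → a + b = 1 →
      p (a • x + b • y) ≤ (a : EReal) * p x + (b : EReal) * p y)
    (hlsc : LowerSemicontinuous s)
    (hsle : ∀ x, s x ≤ p x)
    (hs0 : 0 < s 0) :
    ∃ x' : StrongDual ℝ X, (⨆ x : X, (((x' x : ℝ) : EReal) - p x)) ≤ 0 :=
  stmt1_general p s hsbot hproper hconv hlsc hsle hs0
end

section
/- Let E be a nonzero real Banach space. For every (y*, y**) ∈ E* × E**, inf over (x,x*) ∈ E × E* of [½‖y* − x*‖² + ½‖y** − x̂‖² + ⟨y* − x*, y** − x̂⟩] equals 0, where x̂ denotes the canonical image of x in E**. Equivalently, the image of E × E* under the map L(x,x*) = (x*, x̂) is quasidense in E* × E**. -/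
/-! The expression is `½‖a‖² + ½‖φ‖² + φ a` with `a = y' - x*` and `φ = y'' - x̂`. It is
nonnegative since `|φ a| ≤ ‖φ‖ ‖a‖`. Taking `x = 0`, it can be made arbitrarily small by choosing
`x* = y' - a` with `a = -‖y''‖ w` for some `w` in the unit ball almost norming `y''`. -/

section QuadraticForm

variable {F : Type*} [NormedAddCommGroup F] [NormedSpace ℝ F]

lemma half_sq_norm_add_half_sq_norm_add_apply_nonneg (a : F) (φ : StrongDual ℝ F) :
    0 ≤ ‖a‖ ^ 2 / 2 + ‖φ‖ ^ 2 / 2 + φ a := by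
  have hφa : |φ a| ≤ ‖φ‖ * ‖a‖ := by simpa using φ.le_opNorm a
  nlinarith [neg_abs_le (φ a), sq_nonneg (‖a‖ - ‖φ‖)]

lemma StrongDual.exists_norm_le_one_lt_apply (φ : StrongDual ℝ F) {r : ℝ} (hr : r < ‖φ‖) :
    ∃ w : F, ‖w‖ ≤ 1 ∧ r < φ w := by
  obtain ⟨w, hw, hrw⟩ := φ.exists_lt_apply_of_lt_opNorm hr
  rcases le_or_gt 0 (φ w) with hpos | hneg
  · exact ⟨w, hw.le, by rwa [Real.norm_eq_abs, abs_of_nonneg hpos] at hrw⟩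
  · refine ⟨-w, by simpa using hw.le, ?_⟩
    rwa [map_neg, ← abs_of_neg hneg, ← Real.norm_eq_abs]

lemma exists_half_sq_norm_add_half_sq_norm_add_apply_le (φ : StrongDual ℝ F) {ε : ℝ}
    (hε : 0 < ε) : ∃ a : F, ‖a‖ ^ 2 / 2 + ‖φ‖ ^ 2 / 2 + φ a ≤ ε := by
  set r := ‖φ‖ - ε / (‖φ‖ + 1)
  have hr : r < ‖φ‖ := sub_lt_self _ (by positivity)
  obtain ⟨w, hw, hrw⟩ := φ.exists_norm_le_one_lt_apply hr
  refine ⟨-(‖φ‖ • w), ?_⟩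
  have hnorm : ‖-(‖φ‖ • w)‖ ≤ ‖φ‖ := by
    rw [norm_neg, norm_smul, norm_norm]
    exact mul_le_of_le_one_right (norm_nonneg φ) hw
  have hgap : ‖φ‖ * (‖φ‖ - r) ≤ ε := by
    rw [sub_sub_cancel, mul_div_assoc', div_le_iff₀ (by positivity)]
    nlinarith [norm_nonneg φ]
  calc ‖-(‖φ‖ • w)‖ ^ 2 / 2 + ‖φ‖ ^ 2 / 2 + φ (-(‖φ‖ • w))
      ≤ ‖φ‖ ^ 2 / 2 + ‖φ‖ ^ 2 / 2 - ‖φ‖ * φ w := by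
        rw [map_neg, map_smul, smul_eq_mul]
        nlinarith [norm_nonneg (-(‖φ‖ • w))]
    _ ≤ ‖φ‖ * (‖φ‖ - r) := by nlinarith [norm_nonneg φ]
    _ ≤ ε := hgap

end QuadraticForm

lemma EReal.iInf_coe_eq_zero {ι : Type*} {f : ι → ℝ} (hf : ∀ i, 0 ≤ f i)
    (hsmall : ∀ ε : ℝ, 0 < ε → ∃ i, f i ≤ ε) : ⨅ i, (f i : EReal) = 0 := by
  refine le_antisymm (EReal.le_of_forall_lt_iff_le.mp fun ε hε => ?_)
    (le_iInf fun i => EReal.coe_nonneg.mpr (hf i))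
  obtain ⟨i, hi⟩ := hsmall ε (EReal.coe_pos.mp hε)
  exact (iInf_le _ i).trans (EReal.coe_le_coe_iff.mpr hi)

theorem stmt5_general {E : Type*} [NormedAddCommGroup E] [NormedSpace ℝ E]
    (y' : StrongDual ℝ E) (y'' : StrongDual ℝ (StrongDual ℝ E)) :
    (⨅ p : E × StrongDual ℝ E,
      ((‖y' - p.2‖ ^ 2 / 2 + ‖y'' - NormedSpace.inclusionInDoubleDual ℝ E p.1‖ ^ 2 / 2
        + (y'' - NormedSpace.inclusionInDoubleDual ℝ E p.1) (y' - p.2) : ℝ) : EReal)) = 0 := by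
  refine EReal.iInf_coe_eq_zero
    (fun p => half_sq_norm_add_half_sq_norm_add_apply_nonneg _ _) fun ε hε => ?_
  obtain ⟨a, ha⟩ := exists_half_sq_norm_add_half_sq_norm_add_apply_le y'' hε
  have hy'' : y'' - NormedSpace.inclusionInDoubleDual ℝ E 0 = y'' := by ext; simp
  refine ⟨(0, y' - a), ?_⟩
  rwa [hy'', sub_sub_cancel]

theorem stmt5 {E : Type*} [NormedAddCommGroup E] [NormedSpace ℝ E] [CompleteSpace E]
    [Nontrivial E]
    (y' : StrongDual ℝ E) (y'' : StrongDual ℝ (StrongDual ℝ E)) :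
    (⨅ p : E × StrongDual ℝ E,
      ((‖y' - p.2‖ ^ 2 / 2 + ‖y'' - NormedSpace.inclusionInDoubleDual ℝ E p.1‖ ^ 2 / 2
        + (y'' - NormedSpace.inclusionInDoubleDual ℝ E p.1) (y' - p.2) : ℝ) : EReal)) = 0 :=
  stmt5_general y' y''
end

section
/- Let E be a nonzero real Banach space and A ⊆ E × E* be quasidense. Then A is of type (NI): for all (y*,y**) ∈ E* × E**, inf_{(s,s*)∈A} ⟨s* − y*, ŝ − y**⟩ ≤ 0. -/
/-!
Given `ε > 0`, pick `z ∈ E*` with `‖z‖ ≤ ‖y**‖` and `y**(z) > ‖y**‖² - ε/2`, and apply quasidensity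
at `(0, y* + z)`: it gives `(s, s*) ∈ A` with `½‖s‖² + ½‖v‖² + ⟨s, v⟩ < ε/2`, where `v = s* - y* - z`.
Expanding `⟨s* - y*, ŝ - y**⟩ = ⟨s, v⟩ + ⟨s, z⟩ - y**(v) - y**(z)` and bounding the two middle terms
by `‖y**‖‖s‖ ≤ ½‖s‖² + ½‖y**‖²` and `‖y**‖‖v‖ ≤ ½‖v‖² + ½‖y**‖²` shows that it is `< ε`.
-/

open NormedSpace

lemma EReal.biInf_coe_nonpos_iff {ι : Type*} {s : Set ι} {f : ι → ℝ} :
    (⨅ i ∈ s, (f i : EReal)) ≤ 0 ↔ ∀ ε : ℝ, 0 < ε → ∃ i ∈ s, f i < ε := by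
  constructor
  · intro h ε hε
    obtain ⟨i, hi⟩ := iInf_lt_iff.mp (h.trans_lt (EReal.coe_pos.mpr hε))
    obtain ⟨hs, hi⟩ := iInf_lt_iff.mp hi
    exact ⟨i, hs, EReal.coe_lt_coe_iff.mp hi⟩
  · refine fun h ↦ EReal.le_of_forall_lt_iff_le.mp fun ε hε ↦ ?_
    obtain ⟨i, hs, hi⟩ := h ε (EReal.coe_pos.mp hε)
    exact iInf₂_le_of_le i hs (EReal.coe_le_coe_iff.mpr hi.le)

lemma ContinuousLinearMap.exists_norm_le_lt_apply {F : Type*} [NormedAddCommGroup F]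
    [NormedSpace ℝ F] (φ : StrongDual ℝ F) {c r : ℝ} (hc : 0 ≤ c) (hr : r < ‖φ‖ * c) :
    ∃ x, ‖x‖ ≤ c ∧ r < φ x := by
  rcases hc.eq_or_lt with rfl | hc
  · exact ⟨0, by simp, by simpa using hr⟩
  obtain ⟨x, hx, hφx⟩ := φ.exists_lt_apply_of_lt_opNorm ((div_lt_iff₀ hc).mpr hr)
  rw [Real.norm_eq_abs, lt_abs, div_lt_iff₀ hc, div_lt_iff₀ hc] at hφx
  have hx' : ‖c • x‖ ≤ c := by
    rw [norm_smul, Real.norm_of_nonneg hc.le]; exact mul_le_of_le_one_right hc.le hx.le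
  rcases hφx with hφx | hφx
  · refine ⟨c • x, hx', ?_⟩
    rw [map_smul, smul_eq_mul]; linarith
  · refine ⟨-(c • x), by rwa [norm_neg], ?_⟩
    rw [map_neg, map_smul, smul_eq_mul]; linarith

lemma inclusionInDoubleDual_sub_apply_add_le {E : Type*} [SeminormedAddCommGroup E]
    [NormedSpace ℝ E] (s : E) (v z : StrongDual ℝ E) (Φ : StrongDual ℝ (StrongDual ℝ E))
    (hz : ‖z‖ ≤ ‖Φ‖) :
    (inclusionInDoubleDual ℝ E s - Φ) (v + z) ≤
      ‖s‖ ^ 2 / 2 + ‖v‖ ^ 2 / 2 + v s + (‖Φ‖ ^ 2 - Φ z) := by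
  have hzs : z s ≤ ‖Φ‖ * ‖s‖ :=
    (le_abs_self _).trans ((z.le_opNorm s).trans (by gcongr))
  have hΦv : -Φ v ≤ ‖Φ‖ * ‖v‖ := (neg_le_abs _).trans (Φ.le_opNorm v)
  simp only [sub_apply, dual_def, map_add]
  nlinarith [sq_nonneg (‖s‖ - ‖Φ‖), sq_nonneg (‖v‖ - ‖Φ‖)]

theorem stmt7_general {E : Type*} [NormedAddCommGroup E] [NormedSpace ℝ E]
    (A : Set (E × StrongDual ℝ E))
    (hqd : ∀ c : E × StrongDual ℝ E,
      (⨅ p ∈ A, ((‖p.1 - c.1‖ ^ 2 / 2 + ‖p.2 - c.2‖ ^ 2 / 2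
        + (p.2 - c.2) (p.1 - c.1) : ℝ) : EReal)) ≤ 0)
    (y' : StrongDual ℝ E) (y'' : StrongDual ℝ (StrongDual ℝ E)) :
    (⨅ p ∈ A,
      (((NormedSpace.inclusionInDoubleDual ℝ E p.1 - y'') (p.2 - y') : ℝ) : EReal)) ≤ 0 := by
  refine EReal.biInf_coe_nonpos_iff.mpr fun ε hε ↦ ?_
  obtain ⟨z, hz, hy''z⟩ := y''.exists_norm_le_lt_apply (norm_nonneg y'')
    (by linarith : ‖y''‖ ^ 2 - ε / 2 < ‖y''‖ * ‖y''‖)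
  obtain ⟨p, hpA, hp⟩ := EReal.biInf_coe_nonpos_iff.mp (hqd (0, y' + z)) (ε / 2) (by positivity)
  refine ⟨p, hpA, ?_⟩
  have hsplit : p.2 - y' = (p.2 - (y' + z)) + z := by abel
  simp only [sub_zero] at hp
  rw [hsplit]
  linarith [inclusionInDoubleDual_sub_apply_add_le p.1 (p.2 - (y' + z)) z y'' hz]

theorem stmt7 {E : Type*} [NormedAddCommGroup E] [NormedSpace ℝ E] [CompleteSpace E]
    [Nontrivial E]
    (A : Set (E × StrongDual ℝ E))
    (hqd : ∀ c : E × StrongDual ℝ E,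
      (⨅ p ∈ A, ((‖p.1 - c.1‖ ^ 2 / 2 + ‖p.2 - c.2‖ ^ 2 / 2
        + (p.2 - c.2) (p.1 - c.1) : ℝ) : EReal)) ≤ 0)
    (y' : StrongDual ℝ E) (y'' : StrongDual ℝ (StrongDual ℝ E)) :
    (⨅ p ∈ A,
      (((NormedSpace.inclusionInDoubleDual ℝ E p.1 - y'') (p.2 - y') : ℝ) : EReal)) ≤ 0 :=
  stmt7_general A hqd y' y''
end

section
/- Let E = ℝ and A = {(λ, −λ) : λ ∈ ℝ} ⊆ ℝ × ℝ. Then A is of type (NI) but A is not quasidense: for all (s,s*) ∈ A, ½‖s−1‖² + ½‖s*−0‖² + ⟨s−1, s*−0⟩ = ½. -/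
theorem stmt8 (A : Set (ℝ × ℝ)) (hA : A = {p : ℝ × ℝ | p.2 = -p.1}) :
    (∀ y y' : ℝ, (⨅ p ∈ A, (((p.2 - y') * (p.1 - y) : ℝ) : EReal)) ≤ 0) ∧
    (∀ p ∈ A, (p.1 - 1) ^ 2 / 2 + p.2 ^ 2 / 2 + (p.1 - 1) * p.2 = 1 / 2) ∧
    ¬ (∀ c : ℝ × ℝ, (⨅ p ∈ A, (((p.1 - c.1) ^ 2 / 2 + (p.2 - c.2) ^ 2 / 2
        + (p.1 - c.1) * (p.2 - c.2) : ℝ) : EReal)) ≤ 0) := by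
  subst hA
  refine ⟨?_, ?_, ?_⟩
  · intro y y'
    have hmem : ((y, -y) : ℝ × ℝ) ∈ {p : ℝ × ℝ | p.2 = -p.1} := rfl
    have h := iInf₂_le (f := fun (p : ℝ × ℝ) (_ : p ∈ {p : ℝ × ℝ | p.2 = -p.1}) =>
      (((p.2 - y') * (p.1 - y) : ℝ) : EReal)) ((y, -y) : ℝ × ℝ) hmem
    simpa using h
  · rintro ⟨a, b⟩ hb
    simp only [Set.mem_setOf_eq] at hb
    subst hb
    ring
  · intro h
    have h1 := h (1, 0)
    have h2 : ((1/2 : ℝ) : EReal) ≤ ⨅ p ∈ {p : ℝ × ℝ | p.2 = -p.1},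
        (((p.1 - (1:ℝ)) ^ 2 / 2 + (p.2 - (0:ℝ)) ^ 2 / 2
          + (p.1 - (1:ℝ)) * (p.2 - (0:ℝ)) : ℝ) : EReal) := by
      refine le_iInf₂ fun p hp => ?_
      simp only [Set.mem_setOf_eq] at hp
      have : ((p.1 - (1:ℝ)) ^ 2 / 2 + (p.2 - (0:ℝ)) ^ 2 / 2
          + (p.1 - (1:ℝ)) * (p.2 - (0:ℝ)) : ℝ) = 1/2 := by rw [hp]; ring
      rw [this]
    have := h2.trans h1
    norm_num at this
end

section
/- Let X be a nonzero real Banach space and g : X → ]−∞,∞] proper convex with inf_{x∈X}[g(x) + ½‖x‖²] = 0. If y, z ∈ X satisfy g(y) + ½‖y‖² ≤ 1 and g(z) + ½‖z‖² ≤ 1, then ‖y‖ ≤ ‖z‖ + √8. -/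
theorem stmt9 {X : Type*} [NormedAddCommGroup X] [NormedSpace ℝ X] [CompleteSpace X]
    [Nontrivial X]
    (g : X → EReal)
    (hgbot : ∀ x, g x ≠ ⊥) (hproper : ∃ x, g x ≠ ⊤)
    (hconv : ∀ x y : X, ∀ a b : ℝ, 0 ≤ a → 0 ≤ b → a + b = 1 →
      g (a • x + b • y) ≤ (a : EReal) * g x + (b : EReal) * g y)
    (hinf : (⨅ x : X, (g x + ((‖x‖ ^ 2 / 2 : ℝ) : EReal))) = 0)
    (y z : X)
    (hy : g y + ((‖y‖ ^ 2 / 2 : ℝ) : EReal) ≤ 1)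
    (hz : g z + ((‖z‖ ^ 2 / 2 : ℝ) : EReal) ≤ 1) :
    ‖y‖ ≤ ‖z‖ + Real.sqrt 8 := by
  set m : X := (1/2 : ℝ) • y + (1/2 : ℝ) • z with hm
  have h0 : (0 : EReal) ≤ g m + ((‖m‖ ^ 2 / 2 : ℝ) : EReal) := by
    rw [← hinf]; exact iInf_le _ m
  have hlt : (1 : EReal) < ⊤ := EReal.coe_one ▸ EReal.coe_lt_top 1
  have hyT : g y ≠ ⊤ := by
    intro h
    rw [h, EReal.top_add_of_ne_bot (EReal.coe_ne_bot _)] at hy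
    exact absurd hy (not_le.mpr hlt)
  have hzT : g z ≠ ⊤ := by
    intro h
    rw [h, EReal.top_add_of_ne_bot (EReal.coe_ne_bot _)] at hz
    exact absurd hz (not_le.mpr hlt)
  lift g y to ℝ using ⟨hyT, hgbot y⟩ with ry hry
  lift g z to ℝ using ⟨hzT, hgbot z⟩ with rz hrz
  have hcm := hconv y z (1/2) (1/2) (by norm_num) (by norm_num) (by norm_num)
  have hcm' : g m ≤ (((1/2 : ℝ) * ry + (1/2 : ℝ) * rz : ℝ) : EReal) := by
    refine le_trans hcm ?_
    rw [← hry, ← hrz]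
    norm_cast
  have hmT : g m ≠ ⊤ := by
    intro h
    rw [h] at hcm'
    exact absurd (top_le_iff.mp hcm') (EReal.coe_ne_top _)
  lift g m to ℝ using ⟨hmT, hgbot m⟩ with rm hrm
  have h1 : ry + ‖y‖ ^ 2 / 2 ≤ 1 := by exact_mod_cast hy
  have h2 : rz + ‖z‖ ^ 2 / 2 ≤ 1 := by exact_mod_cast hz
  have h3 : rm ≤ 1/2 * ry + 1/2 * rz := by exact_mod_cast hcm'
  have h4 : 0 ≤ rm + ‖m‖ ^ 2 / 2 := by exact_mod_cast h0
  have h5 : ‖m‖ ≤ (‖y‖ + ‖z‖) / 2 := by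
    calc ‖m‖ ≤ ‖(1/2 : ℝ) • y‖ + ‖(1/2 : ℝ) • z‖ := norm_add_le _ _
    _ = (‖y‖ + ‖z‖) / 2 := by
        rw [norm_smul, norm_smul]
        simp [Real.norm_eq_abs]
        ring
  have hsq : (‖y‖ - ‖z‖) ^ 2 ≤ 8 := by
    nlinarith [norm_nonneg m, norm_nonneg y, norm_nonneg z]
  have habs : |‖y‖ - ‖z‖| ≤ Real.sqrt 8 := by
    rw [← Real.sqrt_sq_eq_abs]
    exact Real.sqrt_le_sqrt hsq
  have := le_abs_self (‖y‖ - ‖z‖)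
  linarith
end

section
/- Let E be a nonzero real Banach space and f : E × E* → ]−∞,∞] proper convex with f(x,x*) ≥ ⟨x,x*⟩ for all (x,x*). Then the coincidence set coinc[f] := {(x,x*) : f(x,x*) = ⟨x,x*⟩} is a monotone subset of E × E*: for all (a,a*), (b,b*) ∈ coinc[f], ⟨a − b, a* − b*⟩ ≥ 0. -/
/-!
Midpoint convexity of `f` and `f ≥ q_L` give, for `(a, a*)`, `(b, b*)` in the coincidence set and
their midpoint `m`, `q_L(m) ≤ f(m) ≤ (q_L(a, a*) + q_L(b, b*)) / 2`. Since `q_L` is a quadratic form,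
`(q_L(a, a*) + q_L(b, b*)) / 2 - q_L(m) = ⟨a - b, a* - b*⟩ / 4`.
-/

section DualPairing

variable {E : Type*} [TopologicalSpace E] [AddCommGroup E] [Module ℝ E]

theorem dualPairing_midpoint (a b : E × StrongDual ℝ E) :
    ((1/2 : ℝ) • a + (1/2 : ℝ) • b).2 ((1/2 : ℝ) • a + (1/2 : ℝ) • b).1
      = (1/2 : ℝ) * a.2 a.1 + (1/2 : ℝ) * b.2 b.1 - (a.2 - b.2) (a.1 - b.1) / 4 := by
  simp only [Prod.fst_add, Prod.snd_add, Prod.smul_fst, Prod.smul_snd, map_add, map_smul,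
    map_sub, add_apply, smul_apply, sub_apply, smul_eq_mul]
  ring

theorem dualPairing_sub_nonneg_of_midpoint_le (f : E × StrongDual ℝ E → EReal)
    (hge : ∀ c : E × StrongDual ℝ E, ((c.2 c.1 : ℝ) : EReal) ≤ f c) {a b : E × StrongDual ℝ E}
    (hmid : f ((1/2 : ℝ) • a + (1/2 : ℝ) • b)
      ≤ ((1/2 : ℝ) : EReal) * f a + ((1/2 : ℝ) : EReal) * f b)
    (ha : f a = ((a.2 a.1 : ℝ) : EReal)) (hb : f b = ((b.2 b.1 : ℝ) : EReal)) :
    0 ≤ (a.2 - b.2) (a.1 - b.1) := by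
  have hq := (hge _).trans hmid
  rw [ha, hb, ← EReal.coe_mul, ← EReal.coe_mul, ← EReal.coe_add, EReal.coe_le_coe_iff,
    dualPairing_midpoint] at hq
  linarith

end DualPairing

theorem stmt11_general {E : Type*} [NormedAddCommGroup E] [NormedSpace ℝ E]
    (f : E × StrongDual ℝ E → EReal)
    (hconv : ∀ b c : E × StrongDual ℝ E, ∀ a a' : ℝ, 0 ≤ a → 0 ≤ a' → a + a' = 1 →
      f (a • b + a' • c) ≤ (a : EReal) * f b + (a' : EReal) * f c)
    (hge : ∀ b : E × StrongDual ℝ E, ((b.2 b.1 : ℝ) : EReal) ≤ f b)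
    (a b : E × StrongDual ℝ E)
    (ha : f a = ((a.2 a.1 : ℝ) : EReal)) (hb : f b = ((b.2 b.1 : ℝ) : EReal)) :
    0 ≤ (a.2 - b.2) (a.1 - b.1) :=
  dualPairing_sub_nonneg_of_midpoint_le f hge
    (hconv a b _ _ (by norm_num) (by norm_num) (by norm_num)) ha hb

theorem stmt11 {E : Type*} [NormedAddCommGroup E] [NormedSpace ℝ E] [CompleteSpace E]
    [Nontrivial E]
    (f : E × StrongDual ℝ E → EReal)
    (hfbot : ∀ b, f b ≠ ⊥) (hproper : ∃ b, f b ≠ ⊤)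
    (hconv : ∀ b c : E × StrongDual ℝ E, ∀ a a' : ℝ, 0 ≤ a → 0 ≤ a' → a + a' = 1 →
      f (a • b + a' • c) ≤ (a : EReal) * f b + (a' : EReal) * f c)
    (hge : ∀ b : E × StrongDual ℝ E, ((b.2 b.1 : ℝ) : EReal) ≤ f b)
    (a b : E × StrongDual ℝ E)
    (ha : f a = ((a.2 a.1 : ℝ) : EReal)) (hb : f b = ((b.2 b.1 : ℝ) : EReal)) :
    0 ≤ (a.2 - b.2) (a.1 - b.1) :=
  stmt11_general f hconv hge a b ha hb
end

section
/- Let E be a nonzero real Banach space and f : E × E* → ]−∞,∞] proper convex with f ≥ q_L on E × E*. Suppose also that f^@ := f* ∘ L satisfies f^@ ≥ q_L on E × E*, where L(x,x*) = (x*, x̂). Then coinc[f] ⊆ coinc[f^@], i.e., if f(a) = q_L(a) then f^@(a) = q_L(a). -/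
/-!
Along the segment from `a` to `b` the quadratic form `q_L` is a real quadratic polynomial in `t`
whose value at `t = 0` is `f a` and whose slope there is `⟨b, La⟩ - 2 q_L(a)`. Since `q_L ≤ f` and
`f` is convex, this polynomial lies below the chord `(1 - t) f(a) + t f(b)`; comparing slopes at
`t = 0` gives `⟨b, La⟩ - q_L(a) ≤ f(b)`, i.e. `f^@(a) ≤ q_L(a)`. The reverse inequality is the
term `b = a` of the supremum defining `f^@(a)`.
-/

/-- `f^@ = f* ∘ L`, where `L(x,x*) = (x*, x̂)` and the dual of `E × E*` is identified
with `E* × E**`;  explicitly `f^@(a) = sup_b [⟨b, La⟩ − f(b)]`. -/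
noncomputable def fat {E : Type*} [NormedAddCommGroup E] [NormedSpace ℝ E]
    (f : E × StrongDual ℝ E → EReal) (a : E × StrongDual ℝ E) : EReal :=
  ⨆ b : E × StrongDual ℝ E, ((a.2 b.1 + b.2 a.1 : ℝ) : EReal) - f b

open Filter Set Topology

lemma le_of_forall_mul_add_sq_le {c k β : ℝ}
    (h : ∀ t ∈ Ioo (0 : ℝ) 1, t * c + t ^ 2 * k ≤ t * β) : c ≤ β := by
  have hlim : Tendsto (fun t : ℝ => c + t * k) (𝓝[>] 0) (𝓝 c) := by
    have : Continuous (fun t : ℝ => c + t * k) := by fun_prop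
    simpa using (this.tendsto 0).mono_left nhdsWithin_le_nhds
  refine le_of_tendsto hlim ?_
  filter_upwards [Ioo_mem_nhdsGT (zero_lt_one' ℝ)] with t ht
  have h' : t * (c + t * k) ≤ t * β := by nlinarith [h t ht]
  exact le_of_mul_le_mul_left h' ht.1

lemma le_of_convex_of_touches {V : Type*} [AddCommGroup V] [Module ℝ V]
    {f : V → EReal} {φ : V → ℝ} {a b : V} {c k : ℝ}
    (hconv : ∀ t : ℝ, 0 ≤ t → t ≤ 1 →
      f ((1 - t) • a + t • b) ≤ ((1 - t : ℝ) : EReal) * f a + (t : EReal) * f b)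
    (hle : ∀ x, (φ x : EReal) ≤ f x) (ha : f a = φ a)
    (hquad : ∀ t : ℝ, φ ((1 - t) • a + t • b) = φ a + t * c + t ^ 2 * k) :
    ((φ a + c : ℝ) : EReal) ≤ f b := by
  rcases eq_or_ne (f b) ⊤ with htop | htop
  · simp [htop]
  have hbot : f b ≠ ⊥ := ne_bot_of_le_ne_bot (EReal.coe_ne_bot _) (hle b)
  obtain ⟨β, hβ⟩ : ∃ β : ℝ, f b = β := ⟨(f b).toReal, (EReal.coe_toReal htop hbot).symm⟩
  rw [hβ, EReal.coe_le_coe_iff]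
  have hchord : ∀ t ∈ Ioo (0 : ℝ) 1, φ a + t * c + t ^ 2 * k ≤ (1 - t) * φ a + t * β := by
    intro t ht
    have h := (hle _).trans (hconv t ht.1.le ht.2.le)
    rwa [hquad, ha, hβ, ← EReal.coe_mul, ← EReal.coe_mul, ← EReal.coe_add,
      EReal.coe_le_coe_iff] at h
  refine le_of_forall_mul_add_sq_le (k := k) fun t ht => ?_
  linarith [hchord t ht]

lemma snd_apply_fst_smul_add_smul {E : Type*} [NormedAddCommGroup E] [NormedSpace ℝ E]
    (a b : E × StrongDual ℝ E) (t : ℝ) :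
    ((1 - t) • a + t • b).2 ((1 - t) • a + t • b).1 =
      a.2 a.1 + t * (a.2 b.1 + b.2 a.1 - 2 * a.2 a.1)
        + t ^ 2 * (a.2 a.1 + b.2 b.1 - (a.2 b.1 + b.2 a.1)) := by
  simp only [Prod.fst_add, Prod.snd_add, Prod.smul_fst, Prod.smul_snd, map_add, map_smul,
    add_apply, smul_apply, smul_eq_mul]
  ring

theorem stmt12_general {E : Type*} [NormedAddCommGroup E] [NormedSpace ℝ E]
    (f : E × StrongDual ℝ E → EReal)
    (hconv : ∀ b c : E × StrongDual ℝ E, ∀ a a' : ℝ, 0 ≤ a → 0 ≤ a' → a + a' = 1 →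
      f (a • b + a' • c) ≤ (a : EReal) * f b + (a' : EReal) * f c)
    (hge : ∀ b : E × StrongDual ℝ E, ((b.2 b.1 : ℝ) : EReal) ≤ f b)
    (a : E × StrongDual ℝ E)
    (ha : f a = ((a.2 a.1 : ℝ) : EReal)) :
    fat f a = ((a.2 a.1 : ℝ) : EReal) := by
  refine le_antisymm (iSup_le fun b => ?_) (le_iSup_of_le a ?_)
  · have hslope := le_of_convex_of_touches (φ := fun x => x.2 x.1) (b := b)
      (fun t h0 h1 => hconv a b (1 - t) t (by linarith) h0 (by ring)) hge ha
      (snd_apply_fst_smul_add_smul a b)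
    refine EReal.sub_le_of_le_add ?_
    calc ((a.2 b.1 + b.2 a.1 : ℝ) : EReal)
        = ((a.2 a.1 + (a.2 a.1 + (a.2 b.1 + b.2 a.1 - 2 * a.2 a.1)) : ℝ) : EReal) := by ring_nf
      _ = ((a.2 a.1 : ℝ) : EReal) + ((a.2 a.1 + (a.2 b.1 + b.2 a.1 - 2 * a.2 a.1) : ℝ) : EReal) :=
          EReal.coe_add _ _
      _ ≤ ((a.2 a.1 : ℝ) : EReal) + f b := by gcongr
  · rw [ha, ← EReal.coe_sub, add_sub_cancel_right]

theorem stmt12 {E : Type*} [NormedAddCommGroup E] [NormedSpace ℝ E] [CompleteSpace E]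
    [Nontrivial E]
    (f : E × StrongDual ℝ E → EReal)
    (hfbot : ∀ b, f b ≠ ⊥) (hproper : ∃ b, f b ≠ ⊤)
    (hconv : ∀ b c : E × StrongDual ℝ E, ∀ a a' : ℝ, 0 ≤ a → 0 ≤ a' → a + a' = 1 →
      f (a • b + a' • c) ≤ (a : EReal) * f b + (a' : EReal) * f c)
    (hge : ∀ b : E × StrongDual ℝ E, ((b.2 b.1 : ℝ) : EReal) ≤ f b)
    (hfatge : ∀ b : E × StrongDual ℝ E, ((b.2 b.1 : ℝ) : EReal) ≤ fat f b)
    (a : E × StrongDual ℝ E)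
    (ha : f a = ((a.2 a.1 : ℝ) : EReal)) :
    fat f a = ((a.2 a.1 : ℝ) : EReal) :=
  stmt12_general f hconv hge a ha
end

section
/- Let E be a nonzero real Banach space and A ⊆ E × E* a closed, monotone, and quasidense subset. Then A is maximally monotone: if c ∈ E × E* and q_L(a − c) ≥ 0 for all a ∈ A, then c ∈ A. -/
/-! If `q_L(a - c) ≥ 0` then `r_L(a - c) ≥ ½‖a.1 - c.1‖² + ½‖a.2 - c.2‖² ≥ ½ dist(a, c)²`, so
quasidensity yields points of `A` arbitrarily close to `c`, and `c ∈ A` because `A` is closed. -/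

theorem exists_mem_lt_of_biInf_coe_le_zero {α : Type*} {A : Set α} {f : α → ℝ}
    (h : (⨅ a ∈ A, (f a : EReal)) ≤ 0) {ε : ℝ} (hε : 0 < ε) : ∃ a ∈ A, f a < ε := by
  have hlt : (⨅ a ∈ A, (f a : EReal)) < ε := h.trans_lt (by exact_mod_cast hε)
  simpa only [iInf_lt_iff, EReal.coe_lt_coe_iff, exists_prop] using hlt

theorem Prod.dist_sq_le_norm_sub_sq_add {E F : Type*} [SeminormedAddCommGroup E]
    [SeminormedAddCommGroup F] (a c : E × F) :
    dist a c ^ 2 ≤ ‖a.1 - c.1‖ ^ 2 + ‖a.2 - c.2‖ ^ 2 := by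
  rw [Prod.dist_eq, dist_eq_norm, dist_eq_norm]
  rcases le_total ‖a.1 - c.1‖ ‖a.2 - c.2‖ with h | h
  · rw [max_eq_right h]; nlinarith [sq_nonneg ‖a.1 - c.1‖]
  · rw [max_eq_left h]; nlinarith [sq_nonneg ‖a.2 - c.2‖]

theorem stmt13_general {E : Type*} [NormedAddCommGroup E] [NormedSpace ℝ E]
    (A : Set (E × StrongDual ℝ E))
    (hclosed : IsClosed A)
    (hqd : ∀ c : E × StrongDual ℝ E,
      (⨅ a ∈ A, ((‖a.1 - c.1‖ ^ 2 / 2 + ‖a.2 - c.2‖ ^ 2 / 2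
        + (a.2 - c.2) (a.1 - c.1) : ℝ) : EReal)) ≤ 0)
    (c : E × StrongDual ℝ E)
    (hc : ∀ a ∈ A, 0 ≤ (a.2 - c.2) (a.1 - c.1)) :
    c ∈ A := by
  refine hclosed.closure_subset (Metric.mem_closure_iff.2 fun ε hε => ?_)
  obtain ⟨a, haA, ha⟩ := exists_mem_lt_of_biInf_coe_le_zero (hqd c) (by positivity : 0 < ε ^ 2 / 2)
  have hdist : dist a c ^ 2 < ε ^ 2 := by
    linarith [Prod.dist_sq_le_norm_sub_sq_add a c, hc a haA]
  exact ⟨a, haA, dist_comm c a ▸ (pow_lt_pow_iff_left₀ dist_nonneg hε.le two_ne_zero).1 hdist⟩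

theorem stmt13 {E : Type*} [NormedAddCommGroup E] [NormedSpace ℝ E] [CompleteSpace E]
    [Nontrivial E]
    (A : Set (E × StrongDual ℝ E))
    (hclosed : IsClosed A)
    (hmono : ∀ a ∈ A, ∀ b ∈ A, 0 ≤ (a.2 - b.2) (a.1 - b.1))
    (hqd : ∀ c : E × StrongDual ℝ E,
      (⨅ a ∈ A, ((‖a.1 - c.1‖ ^ 2 / 2 + ‖a.2 - c.2‖ ^ 2 / 2
        + (a.2 - c.2) (a.1 - c.1) : ℝ) : EReal)) ≤ 0)
    (c : E × StrongDual ℝ E)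
    (hc : ∀ a ∈ A, 0 ≤ (a.2 - c.2) (a.1 - c.1)) :
    c ∈ A :=
  stmt13_general A hclosed hqd c hc
end

section
/- Let E be a nonzero real Banach space and A ⊆ E × E* a nonempty quasidense subset. Define Θ_A : E* × E** → ]−∞,∞] by Θ_A(y*,y**) := sup_{(s,s*)∈A}[⟨s,y*⟩ + ⟨s*,y**⟩ − ⟨s,s*⟩]. Then Θ_A(y*,y**) ≥ ⟨y*,y**⟩ for all (y*,y**) ∈ E* × E**. -/
/-!
Test quasidensity at `(0, y* + ‖y**‖ u)`, where `u` is a unit-ball functional nearly norming `y**`.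
Bounding `⟨u, s⟩ ≤ ‖s‖` and `y**(s* - x*) ≥ -‖y**‖ ‖s* - x*‖`, the defect
`⟨s, y*⟩ + ⟨s*, y**⟩ - ⟨s, s*⟩ - ⟨y*, y**⟩` is at least minus the quasidensity expression plus the
two squares `(‖s‖ - ‖y**‖)² / 2` and `(‖s* - x*‖ - ‖y**‖)² / 2`, up to the norming error.
-/

theorem EReal.coe_le_biSup_of_forall_sub_lt {α : Type*} {s : Set α} {g : α → ℝ} {x : ℝ}
    (h : ∀ ε > 0, ∃ a ∈ s, x - ε < g a) : (x : EReal) ≤ ⨆ a ∈ s, (g a : EReal) := by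
  refine le_of_forall_lt fun b hb => ?_
  obtain ⟨r, hbr, hrx⟩ := EReal.lt_iff_exists_real_btwn.mp hb
  obtain ⟨a, ha, hga⟩ := h (x - r) (_root_.sub_pos.mpr (EReal.coe_lt_coe_iff.mp hrx))
  refine lt_biSup_iff.mpr ⟨a, ha, hbr.trans ?_⟩
  exact EReal.coe_lt_coe_iff.mpr (by linarith)

theorem ContinuousLinearMap.exists_norm_le_one_and_sub_lt_apply {F : Type*}
    [NormedAddCommGroup F] [NormedSpace ℝ F] (f : StrongDual ℝ F) {δ : ℝ} (hδ : 0 < δ) :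
    ∃ u : F, ‖u‖ ≤ 1 ∧ ‖f‖ - δ < f u := by
  obtain ⟨u, hu, hfu⟩ := f.exists_lt_apply_of_lt_opNorm (sub_lt_self ‖f‖ hδ)
  rw [Real.norm_eq_abs] at hfu
  rcases abs_choice (f u) with h | h
  · exact ⟨u, hu.le, h ▸ hfu⟩
  · exact ⟨-u, by simpa using hu.le, by simpa [h] using hfu⟩

theorem bidual_apply_le_add_quasidense_gap {E : Type*} [NormedAddCommGroup E] [NormedSpace ℝ E]
    (s : E) (s' y' u : StrongDual ℝ E) (y'' : StrongDual ℝ (StrongDual ℝ E)) (hu : ‖u‖ ≤ 1) :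
    y'' y' ≤ (y' s + y'' s' - s' s)
      + (‖s‖ ^ 2 / 2 + ‖s' - (y' + ‖y''‖ • u)‖ ^ 2 / 2 + (s' - (y' + ‖y''‖ • u)) s)
      + ‖y''‖ * (‖y''‖ - y'' u) := by
  set N := ‖y''‖
  set v := s' - (y' + N • u)
  have hy''v : -(N * ‖v‖) ≤ y'' v :=
    (abs_le.mp ((Real.norm_eq_abs _).symm.trans_le (y''.le_opNorm v))).1
  have hus : u s ≤ ‖s‖ :=
    (le_abs_self _).trans ((u.le_opNorm s).trans (mul_le_of_le_one_left (norm_nonneg _) hu))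
  have hs' : y'' s' = y'' v + y'' y' + N * y'' u := by
    simp only [v, map_sub, map_add, map_smul, smul_eq_mul]
    ring
  have hvs : v s = s' s - y' s - N * u s := by
    simp only [v, sub_apply, add_apply, smul_apply, smul_eq_mul]
    ring
  nlinarith [sq_nonneg (‖s‖ - N), sq_nonneg (‖v‖ - N),
    mul_le_mul_of_nonneg_left hus (norm_nonneg y'')]

theorem stmt14_general {E : Type*} [NormedAddCommGroup E] [NormedSpace ℝ E]
    (A : Set (E × StrongDual ℝ E))
    (hqd : ∀ c : E × StrongDual ℝ E,
      (⨅ a ∈ A, ((‖a.1 - c.1‖ ^ 2 / 2 + ‖a.2 - c.2‖ ^ 2 / 2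
        + (a.2 - c.2) (a.1 - c.1) : ℝ) : EReal)) ≤ 0)
    (y' : StrongDual ℝ E) (y'' : StrongDual ℝ (StrongDual ℝ E)) :
    ((y'' y' : ℝ) : EReal) ≤
      ⨆ p ∈ A, ((y' p.1 + y'' p.2 - p.2 p.1 : ℝ) : EReal) := by
  refine EReal.coe_le_biSup_of_forall_sub_lt fun ε hε => ?_
  set N := ‖y''‖
  obtain ⟨u, hu, hyu⟩ :=
    y''.exists_norm_le_one_and_sub_lt_apply (δ := ε / (2 * (N + 1))) (by positivity)
  have hnorming : N * (N - y'' u) < ε / 2 := by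
    have hN : N * (ε / (2 * (N + 1))) < ε / 2 := by
      rw [mul_div_assoc', div_lt_div_iff₀ (by positivity) two_pos]
      nlinarith
    exact lt_of_le_of_lt (by gcongr; linarith) hN
  have hgap : (0 : EReal) < ((ε / 2 : ℝ) : EReal) := by exact_mod_cast half_pos hε
  obtain ⟨⟨s, s'⟩, hA, hq⟩ := lt_biInf_iff.mp ((hqd (0, y' + N • u)).trans_lt hgap)
  rw [EReal.coe_lt_coe_iff] at hq
  simp only [sub_zero] at hq
  refine ⟨(s, s'), hA, ?_⟩
  linarith [bidual_apply_le_add_quasidense_gap s s' y' u y'' hu]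

theorem stmt14 {E : Type*} [NormedAddCommGroup E] [NormedSpace ℝ E] [CompleteSpace E]
    [Nontrivial E]
    (A : Set (E × StrongDual ℝ E)) (hne : A.Nonempty)
    (hqd : ∀ c : E × StrongDual ℝ E,
      (⨅ a ∈ A, ((‖a.1 - c.1‖ ^ 2 / 2 + ‖a.2 - c.2‖ ^ 2 / 2
        + (a.2 - c.2) (a.1 - c.1) : ℝ) : EReal)) ≤ 0)
    (y' : StrongDual ℝ E) (y'' : StrongDual ℝ (StrongDual ℝ E)) :
    ((y'' y' : ℝ) : EReal) ≤
      ⨆ p ∈ A, ((y' p.1 + y'' p.2 - p.2 p.1 : ℝ) : EReal) :=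
  stmt14_general A hqd y' y''
end

section
/- Let E be a nonzero real Banach space, S : E ⇉ E* maximally monotone, and φ_S its Fitzpatrick function. Then φ_S is proper convex lower semicontinuous, φ_S ≥ q_L on E × E*, and {b ∈ E × E* : φ_S(b) = q_L(b)} = G(S). -/
/-!
Writing `b = (x, x*)`, each term of the supremum defining `φ_S(b)` equals
`⟨x, x*⟩ - ⟨s - x, s* - x*⟩`, so `φ_S(b) ≤ q_L(b)` holds exactly when `b` is monotonically related
to `G(S)`, and `φ_S(b) > q_L(b)` as soon as it is not. By maximality the points monotonically
related to `G(S)` are those of `G(S)`, which gives `φ_S ≥ q_L` with equality precisely on `G(S)`.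
Convexity and lower semicontinuity hold because `φ_S` is a supremum of continuous affine functions.
-/

/-- The Fitzpatrick function of the monotone set `G ⊆ E × E*`. -/
noncomputable def fitz {E : Type*} [NormedAddCommGroup E] [NormedSpace ℝ E]
    (G : Set (E × StrongDual ℝ E)) (b : E × StrongDual ℝ E) : EReal :=
  ⨆ p ∈ G, ((b.2 p.1 + p.2 b.1 - p.2 p.1 : ℝ) : EReal)

section

variable {E : Type*} [NormedAddCommGroup E] [NormedSpace ℝ E] {G : Set (E × StrongDual ℝ E)}

theorem le_fitz {p : E × StrongDual ℝ E} (hp : p ∈ G) (b : E × StrongDual ℝ E) :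
    ((b.2 p.1 + p.2 b.1 - p.2 p.1 : ℝ) : EReal) ≤ fitz G b :=
  le_biSup (fun p => ((b.2 p.1 + p.2 b.1 - p.2 p.1 : ℝ) : EReal)) hp

theorem fitz_term_eq_sub_pairing (b p : E × StrongDual ℝ E) :
    b.2 p.1 + p.2 b.1 - p.2 p.1 = b.2 b.1 - (p.2 - b.2) (p.1 - b.1) := by
  simp only [sub_apply, map_sub]
  ring

theorem fitz_le_pairing_iff (b : E × StrongDual ℝ E) :
    fitz G b ≤ ((b.2 b.1 : ℝ) : EReal) ↔ ∀ p ∈ G, 0 ≤ (p.2 - b.2) (p.1 - b.1) := by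
  simp only [fitz, iSup₂_le_iff, EReal.coe_le_coe_iff, fitz_term_eq_sub_pairing b, sub_le_self_iff]

theorem pairing_le_fitz_of_mem {b : E × StrongDual ℝ E} (hb : b ∈ G) :
    ((b.2 b.1 : ℝ) : EReal) ≤ fitz G b := by
  simpa using le_fitz hb b

theorem pairing_lt_fitz_of_neg {b p : E × StrongDual ℝ E} (hp : p ∈ G)
    (hneg : (p.2 - b.2) (p.1 - b.1) < 0) : ((b.2 b.1 : ℝ) : EReal) < fitz G b := by
  refine lt_of_lt_of_le ?_ (le_fitz hp b)
  rw [EReal.coe_lt_coe_iff, fitz_term_eq_sub_pairing b p]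
  linarith

theorem pairing_lt_fitz_of_not_mem
    (hmax : ∀ c : E × StrongDual ℝ E, (∀ a ∈ G, 0 ≤ (a.2 - c.2) (a.1 - c.1)) → c ∈ G)
    {b : E × StrongDual ℝ E} (hb : b ∉ G) : ((b.2 b.1 : ℝ) : EReal) < fitz G b := by
  obtain ⟨p, hp, hneg⟩ : ∃ p ∈ G, (p.2 - b.2) (p.1 - b.1) < 0 := by
    by_contra! h
    exact hb (hmax b h)
  exact pairing_lt_fitz_of_neg hp hneg

theorem pairing_le_fitz
    (hmax : ∀ c : E × StrongDual ℝ E, (∀ a ∈ G, 0 ≤ (a.2 - c.2) (a.1 - c.1)) → c ∈ G)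
    (b : E × StrongDual ℝ E) : ((b.2 b.1 : ℝ) : EReal) ≤ fitz G b := by
  by_cases hb : b ∈ G
  · exact pairing_le_fitz_of_mem hb
  · exact (pairing_lt_fitz_of_not_mem hmax hb).le

theorem fitz_eq_pairing_iff (hmono : ∀ a ∈ G, ∀ b ∈ G, 0 ≤ (a.2 - b.2) (a.1 - b.1))
    (hmax : ∀ c : E × StrongDual ℝ E, (∀ a ∈ G, 0 ≤ (a.2 - c.2) (a.1 - c.1)) → c ∈ G)
    (b : E × StrongDual ℝ E) : fitz G b = ((b.2 b.1 : ℝ) : EReal) ↔ b ∈ G := by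
  refine ⟨fun heq => ?_, fun hb => ?_⟩
  · by_contra hb
    exact (pairing_lt_fitz_of_not_mem hmax hb).ne' heq
  · exact le_antisymm ((fitz_le_pairing_iff b).2 fun p hp => hmono p hp b hb)
      (pairing_le_fitz_of_mem hb)

theorem nonempty_of_maximal
    (hmax : ∀ c : E × StrongDual ℝ E, (∀ a ∈ G, 0 ≤ (a.2 - c.2) (a.1 - c.1)) → c ∈ G) :
    G.Nonempty :=
  Set.nonempty_iff_ne_empty.2 fun h => by simpa [h] using hmax 0 (by simp [h])

theorem fitz_ne_bot {p : E × StrongDual ℝ E} (hp : p ∈ G) (b : E × StrongDual ℝ E) :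
    fitz G b ≠ ⊥ :=
  ne_bot_of_le_ne_bot (EReal.coe_ne_bot _) (le_fitz hp b)

theorem fitz_ne_top_of_mem (hmono : ∀ a ∈ G, ∀ b ∈ G, 0 ≤ (a.2 - b.2) (a.1 - b.1))
    {b : E × StrongDual ℝ E} (hb : b ∈ G) : fitz G b ≠ ⊤ :=
  ne_top_of_le_ne_top (EReal.coe_ne_top _)
    ((fitz_le_pairing_iff b).2 fun p hp => hmono p hp b hb)

theorem fitz_term_affine (b c p : E × StrongDual ℝ E) {a a' : ℝ} (hsum : a + a' = 1) :
    ((a • b + a' • c).2 p.1 + p.2 (a • b + a' • c).1 - p.2 p.1 : ℝ)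
      = a * (b.2 p.1 + p.2 b.1 - p.2 p.1) + a' * (c.2 p.1 + p.2 c.1 - p.2 p.1) := by
  simp only [Prod.fst_add, Prod.snd_add, Prod.smul_fst, Prod.smul_snd,
    add_apply, FunLike.coe_smul, Pi.smul_apply, map_add,
    map_smul, smul_eq_mul]
  linear_combination p.2 p.1 * hsum

theorem fitz_convex (b c : E × StrongDual ℝ E) {a a' : ℝ} (ha : 0 ≤ a) (ha' : 0 ≤ a')
    (hsum : a + a' = 1) :
    fitz G (a • b + a' • c) ≤ (a : EReal) * fitz G b + (a' : EReal) * fitz G c := by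
  refine iSup₂_le fun p hp => ?_
  rw [fitz_term_affine b c p hsum, EReal.coe_add, EReal.coe_mul, EReal.coe_mul]
  exact add_le_add (mul_le_mul_of_nonneg_left (le_fitz hp b) (EReal.coe_nonneg.2 ha))
    (mul_le_mul_of_nonneg_left (le_fitz hp c) (EReal.coe_nonneg.2 ha'))

theorem lowerSemicontinuous_fitz : LowerSemicontinuous (fitz G) :=
  lowerSemicontinuous_iSup fun _ => lowerSemicontinuous_iSup fun _ =>
    (continuous_coe_real_ereal.comp (by fun_prop)).lowerSemicontinuous

end

theorem stmt15_general {E : Type*} [NormedAddCommGroup E] [NormedSpace ℝ E]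
    (G : Set (E × StrongDual ℝ E))
    (hmono : ∀ a ∈ G, ∀ b ∈ G, 0 ≤ (a.2 - b.2) (a.1 - b.1))
    (hmax : ∀ c : E × StrongDual ℝ E,
      (∀ a ∈ G, 0 ≤ (a.2 - c.2) (a.1 - c.1)) → c ∈ G) :
    (∀ b, fitz G b ≠ ⊥) ∧ (∃ b, fitz G b ≠ ⊤) ∧
    (∀ b c : E × StrongDual ℝ E, ∀ a a' : ℝ, 0 ≤ a → 0 ≤ a' → a + a' = 1 →
      fitz G (a • b + a' • c) ≤ (a : EReal) * fitz G b + (a' : EReal) * fitz G c) ∧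
    LowerSemicontinuous (fitz G) ∧
    (∀ b : E × StrongDual ℝ E, ((b.2 b.1 : ℝ) : EReal) ≤ fitz G b) ∧
    {b : E × StrongDual ℝ E | fitz G b = ((b.2 b.1 : ℝ) : EReal)} = G := by
  obtain ⟨p₀, hp₀⟩ := nonempty_of_maximal hmax
  exact ⟨fitz_ne_bot hp₀, ⟨p₀, fitz_ne_top_of_mem hmono hp₀⟩,
    fun b c _ _ ha ha' hsum => fitz_convex b c ha ha' hsum, lowerSemicontinuous_fitz,
    pairing_le_fitz hmax, Set.ext (fitz_eq_pairing_iff hmono hmax)⟩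

theorem stmt15 {E : Type*} [NormedAddCommGroup E] [NormedSpace ℝ E] [CompleteSpace E]
    [Nontrivial E]
    (G : Set (E × StrongDual ℝ E))
    (hmono : ∀ a ∈ G, ∀ b ∈ G, 0 ≤ (a.2 - b.2) (a.1 - b.1))
    (hmax : ∀ c : E × StrongDual ℝ E,
      (∀ a ∈ G, 0 ≤ (a.2 - c.2) (a.1 - c.1)) → c ∈ G) :
    (∀ b, fitz G b ≠ ⊥) ∧ (∃ b, fitz G b ≠ ⊤) ∧
    (∀ b c : E × StrongDual ℝ E, ∀ a a' : ℝ, 0 ≤ a → 0 ≤ a' → a + a' = 1 →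
      fitz G (a • b + a' • c) ≤ (a : EReal) * fitz G b + (a' : EReal) * fitz G c) ∧
    LowerSemicontinuous (fitz G) ∧
    (∀ b : E × StrongDual ℝ E, ((b.2 b.1 : ℝ) : EReal) ≤ fitz G b) ∧
    {b : E × StrongDual ℝ E | fitz G b = ((b.2 b.1 : ℝ) : EReal)} = G :=
  stmt15_general G hmono hmax
end

section
/- Let E be a nonzero real Banach space, S : E ⇉ E* maximally monotone, and suppose dom φ_S ⊆ G(S). Then φ_S* = θ_S on E* × E**, where θ_S(y*,y**) := sup_{(s,s*)∈G(S)}[⟨s,y*⟩ + ⟨s*,y**⟩ − ⟨s,s*⟩] and φ_S* is the Fenchel conjugate of the Fitzpatrick function under the pairing ⟨(x,x*),(y*,y**)⟩ = ⟨x,y*⟩ + ⟨x*,y**⟩. -/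
/-! On the graph of a monotone operator the Fitzpatrick function is the duality pairing, and
under `dom φ_S ⊆ G(S)` it is `+∞` everywhere else. So in the supremum defining `φ_S*` every
point off the graph contributes `-∞`, and every point `(s, s*)` of the graph contributes
`⟨s, y*⟩ + ⟨s*, y**⟩ - ⟨s, s*⟩`, which is the corresponding term of `θ_S`. -/

lemma fitz_eq_of_mem {E : Type*} [NormedAddCommGroup E] [NormedSpace ℝ E]
    {G : Set (E × StrongDual ℝ E)} {b : E × StrongDual ℝ E} (hb : b ∈ G)
    (hrel : ∀ p ∈ G, 0 ≤ (p.2 - b.2) (p.1 - b.1)) :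
    fitz G b = ((b.2 b.1 : ℝ) : EReal) := by
  apply le_antisymm
  · refine iSup₂_le fun p hp => EReal.coe_le_coe_iff.mpr ?_
    have h := hrel p hp
    simp only [sub_apply, map_sub] at h
    linarith
  · refine le_trans (le_of_eq ?_) (le_iSup₂ (f := fun p (_ : p ∈ G) =>
      ((b.2 p.1 + p.2 b.1 - p.2 p.1 : ℝ) : EReal)) b hb)
    simp

theorem stmt16_general {E : Type*} [NormedAddCommGroup E] [NormedSpace ℝ E]
    (G : Set (E × StrongDual ℝ E))
    (hmono : ∀ a ∈ G, ∀ b ∈ G, 0 ≤ (a.2 - b.2) (a.1 - b.1))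
    (hdom : {b : E × StrongDual ℝ E | fitz G b ≠ ⊤} ⊆ G) :
    ∀ (y' : StrongDual ℝ E) (y'' : StrongDual ℝ (StrongDual ℝ E)),
      (⨆ b : E × StrongDual ℝ E, ((y' b.1 + y'' b.2 : ℝ) : EReal) - fitz G b)
        = ⨆ p ∈ G, ((y' p.1 + y'' p.2 - p.2 p.1 : ℝ) : EReal) := by
  intro y' y''
  refine iSup_congr fun b => ?_
  by_cases hb : b ∈ G
  · rw [fitz_eq_of_mem hb (fun p hp => hmono p hp b hb), iSup_pos hb, ← EReal.coe_sub]
  · have htop : fitz G b = ⊤ := not_not.mp fun h => hb (hdom h)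
    simp [htop, hb, EReal.sub_top]

theorem stmt16 {E : Type*} [NormedAddCommGroup E] [NormedSpace ℝ E] [CompleteSpace E]
    [Nontrivial E]
    (G : Set (E × StrongDual ℝ E))
    (hmono : ∀ a ∈ G, ∀ b ∈ G, 0 ≤ (a.2 - b.2) (a.1 - b.1))
    (hmax : ∀ c : E × StrongDual ℝ E,
      (∀ a ∈ G, 0 ≤ (a.2 - c.2) (a.1 - c.1)) → c ∈ G)
    (hdom : {b : E × StrongDual ℝ E | fitz G b ≠ ⊤} ⊆ G) :
    ∀ (y' : StrongDual ℝ E) (y'' : StrongDual ℝ (StrongDual ℝ E)),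
      (⨆ b : E × StrongDual ℝ E, ((y' b.1 + y'' b.2 : ℝ) : EReal) - fitz G b)
        = ⨆ p ∈ G, ((y' p.1 + y'' p.2 - p.2 p.1 : ℝ) : EReal) :=
  stmt16_general G hmono hdom
end

section
/- Let E be a reflexive real Banach space and S : E ⇉ E* maximally monotone. Then G(S) is quasidense in E × E*: for all (x,x*) ∈ E × E*, inf_{(s,s*)∈G(S)}[½‖s−x‖² + ½‖s*−x*‖² + ⟨s−x,s*−x*⟩] ≤ 0. -/
/-
Translating `c` to the origin, it suffices to find `b ∈ G` with `Q b + ⟨b₁, b₂⟩ ≤ 0`, where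
`Q b = ‖b₁‖²/2 + ‖b₂‖²/2`. Let `φ b = sup_{a ∈ G} (⟨b₁, a₂⟩ + ⟨a₁, b₂⟩ - ⟨a₁, a₂⟩)` be the
Fitzpatrick function of `G`.

First, `φ + Q` takes values below every `ε > 0`. Otherwise Hahn–Banach separates the epigraph of
`φ` from the strict hypograph of `ε - Q`; by reflexivity the separating functional is given by a
point `c` of `E × E*`, and since `Q` is its own Fenchel conjugate, the separation inequality says
`⟨a₁ - c₁, a₂ - c₂⟩ ≥ ε` for all `a ∈ G`. Maximality then puts `c` in `G`, which is absurd.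

Second, the sets `{φ + Q ≤ 1/(n+1)}` are nonempty, bounded, closed and convex, hence weakly compact
since `E × E*` is reflexive, so they share a point `b`. As `φ b + Q b ≤ 0 ≤ Q b + ⟨b₁, b₂⟩`, `b` is
monotonically related to `G`, so `b ∈ G`, and then `φ b ≥ ⟨b₁, b₂⟩` gives `Q b + ⟨b₁, b₂⟩ ≤ 0`.
-/

open Set

namespace NormedSpace

variable {E F : Type*} [NormedAddCommGroup E] [NormedSpace ℝ E]
  [NormedAddCommGroup F] [NormedSpace ℝ F]

theorem surjective_inclusionInDoubleDual_prod
    (hE : Function.Surjective (inclusionInDoubleDual ℝ E))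
    (hF : Function.Surjective (inclusionInDoubleDual ℝ F)) :
    Function.Surjective (inclusionInDoubleDual ℝ (E × F)) := by
  intro Φ
  obtain ⟨x, hx⟩ := hE (Φ.comp ((ContinuousLinearMap.fst ℝ E F).precomp ℝ))
  obtain ⟨y, hy⟩ := hF (Φ.comp ((ContinuousLinearMap.snd ℝ E F).precomp ℝ))
  refine ⟨(x, y), ContinuousLinearMap.ext fun h => ?_⟩
  have hsplit : h = (h.comp (.inl ℝ E F)).comp (.fst ℝ E F)
      + (h.comp (.inr ℝ E F)).comp (.snd ℝ E F) :=
    ContinuousLinearMap.ext fun v => (h.comp_inl_add_comp_inr v).symm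
  have hx' := congrArg (· (h.comp (.inl ℝ E F))) hx
  have hy' := congrArg (· (h.comp (.inr ℝ E F))) hy
  simp only [dual_def, ContinuousLinearMap.comp_apply, ContinuousLinearMap.precomp_apply] at hx' hy'
  conv_rhs => rw [hsplit, map_add, ← hx', ← hy']
  rw [dual_def, ← map_add]
  simp

theorem surjective_inclusionInDoubleDual_strongDual
    (hE : Function.Surjective (inclusionInDoubleDual ℝ E)) :
    Function.Surjective (inclusionInDoubleDual ℝ (StrongDual ℝ E)) := by
  intro Ψ
  refine ⟨Ψ.comp (inclusionInDoubleDual ℝ E), ContinuousLinearMap.ext fun g => ?_⟩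
  obtain ⟨y, rfl⟩ := hE g
  rfl

theorem exists_norm_le_one_apply_eq_norm
    (hE : Function.Surjective (inclusionInDoubleDual ℝ E)) (f : StrongDual ℝ E) :
    ∃ x : E, ‖x‖ ≤ 1 ∧ f x = ‖f‖ := by
  obtain ⟨Φ, hΦ, hΦf⟩ := exists_dual_vector'' ℝ f
  obtain ⟨x, rfl⟩ := hE Φ
  exact ⟨x, by rwa [← (inclusionInDoubleDualLi ℝ (E := E)).norm_map x], hΦf⟩

theorem isClosed_toWeakSpace_image {K : Set E} (hc : IsClosed K) (hconv : Convex ℝ K) :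
    IsClosed (toWeakSpace ℝ E '' K) := by
  rw [← closure_subset_iff_isClosed, ← hconv.toWeakSpace_closure ℝ, hc.closure_eq]

theorem isCompact_toWeakSpace_image
    (hE : Function.Surjective (inclusionInDoubleDual ℝ E)) {K : Set E}
    (hb : Bornology.IsBounded K) (hc : IsClosed K) (hconv : Convex ℝ K) :
    IsCompact (toWeakSpace ℝ E '' K) := by
  rw [← (isClosed_toWeakSpace_image hc hconv).closure_eq]
  refine isCompact_closure_of_isBounded ℝ E _ ?_ fun Φ _ => ?_
  · rwa [(toWeakSpace ℝ E).injective.preimage_image]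
  · obtain ⟨x, rfl⟩ := hE (WeakDual.toStrongDual Φ)
    exact ⟨toWeakSpace ℝ E x, rfl⟩

theorem nonempty_iInter_of_convex_of_isClosed_of_isBounded
    (hE : Function.Surjective (inclusionInDoubleDual ℝ E)) (K : ℕ → Set E)
    (hanti : ∀ n, K (n + 1) ⊆ K n) (hne : ∀ n, (K n).Nonempty)
    (hb : Bornology.IsBounded (K 0)) (hc : ∀ n, IsClosed (K n)) (hconv : ∀ n, Convex ℝ (K n)) :
    (⋂ n, K n).Nonempty := by
  obtain ⟨x, hx⟩ := IsCompact.nonempty_iInter_of_sequence_nonempty_isCompact_isClosed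
    (fun n => toWeakSpace ℝ E '' K n) (fun n => image_mono (hanti n))
    (fun n => (hne n).image _) (isCompact_toWeakSpace_image hE hb (hc 0) (hconv 0))
    (fun n => isClosed_toWeakSpace_image (hc n) (hconv n))
  refine ⟨(toWeakSpace ℝ E).symm x, mem_iInter.2 fun n => ?_⟩
  obtain ⟨y, hy, rfl⟩ := mem_iInter.1 hx n
  simpa using hy

end NormedSpace

theorem ConcaveOn.exists_strongDual_add_le_of_le {V : Type*} [TopologicalSpace V]
    [AddCommGroup V] [Module ℝ V] [IsTopologicalAddGroup V] [ContinuousSMul ℝ V]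
    {h : V → ℝ} (hh : ConcaveOn ℝ univ h) (hhc : Continuous h)
    {A : Set (V × ℝ)} (hA : Convex ℝ A) (hAne : A.Nonempty) (hAh : ∀ p ∈ A, h p.1 ≤ p.2) :
    ∃ (ℓ : StrongDual ℝ V) (u : ℝ), (∀ v, ℓ v + h v ≤ u) ∧ ∀ p ∈ A, u ≤ ℓ p.1 + p.2 := by
  have hB : IsOpen {p : V × ℝ | p.1 ∈ univ ∧ p.2 < h p.1} := by
    simpa only [mem_univ, true_and] using
      isOpen_lt continuous_snd (by fun_prop : Continuous fun p : V × ℝ => h p.1)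
  obtain ⟨f, u, hfB, hfA⟩ := geometric_hahn_banach_open hh.convex_strict_hypograph hB hA <|
    disjoint_left.2 fun p hpB hpA => (hAh p hpA).not_gt hpB.2
  set t := f (0, 1)
  set L := f.comp (.inl ℝ V ℝ)
  have hf : ∀ p : V × ℝ, f p = L p.1 + p.2 * t := fun p => by
    rw [show p = (p.1, 0) + p.2 • ((0 : V), (1 : ℝ)) by simp, map_add, map_smul]
    simp [L, t]
  obtain ⟨p₀, hp₀⟩ := hAne
  have ht : 0 < t := by
    have h₁ := hfB (p₀.1, h p₀.1 - 1) ⟨mem_univ _, by simp⟩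
    have h₂ := hfA p₀ hp₀
    rw [hf] at h₁ h₂
    nlinarith [hAh p₀ hp₀]
  have hf' : ∀ p : V × ℝ, f p = t * ((t⁻¹ • L) p.1 + p.2) := fun p => by
    rw [hf, smul_apply, smul_eq_mul]
    field_simp
  refine ⟨t⁻¹ • L, u / t, fun v => ?_, fun p hp => ?_⟩
  · refine le_sub_iff_add_le'.1 (le_of_forall_lt fun r hr => ?_)
    have := hfB (v, r) ⟨mem_univ _, hr⟩
    rw [hf'] at this
    exact lt_sub_iff_add_lt'.2 ((lt_div_iff₀' ht).2 this)
  · exact (div_le_iff₀' ht).2 (hf' p ▸ hfA p hp)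

section

variable {F : Type*} [NormedAddCommGroup F] [NormedSpace ℝ F]

theorem convexOn_sq_norm_div_two : ConvexOn ℝ univ fun x : F => ‖x‖ ^ 2 / 2 :=
  ((convexOn_norm convex_univ).pow (fun _ _ => norm_nonneg _) 2).smul
    (by norm_num : (0 : ℝ) ≤ 1 / 2) |>.congr fun x _ => by
      simp only [Pi.pow_apply, smul_eq_mul]
      ring

theorem sq_div_two_le_apply_smul_sub (f : StrongDual ℝ F) {x : F} (hx : ‖x‖ ≤ 1) {m : ℝ}
    (hm : 0 ≤ m) (hfx : f x = m) : m ^ 2 / 2 ≤ f (m • x) - ‖m • x‖ ^ 2 / 2 := by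
  rw [map_smul, hfx, smul_eq_mul, norm_smul, Real.norm_of_nonneg hm]
  have : (m * ‖x‖) ^ 2 ≤ m ^ 2 :=
    pow_le_pow_left₀ (by positivity) (mul_le_of_le_one_right hm hx) 2
  nlinarith

end

section

variable {E : Type*} [NormedAddCommGroup E] [NormedSpace ℝ E]

def IsMonotoneGraph (G : Set (E × StrongDual ℝ E)) : Prop :=
  ∀ a ∈ G, ∀ b ∈ G, 0 ≤ (a.2 - b.2) (a.1 - b.1)

def IsMaximalMonotoneGraph (G : Set (E × StrongDual ℝ E)) : Prop :=
  IsMonotoneGraph G ∧ ∀ c : E × StrongDual ℝ E, (∀ a ∈ G, 0 ≤ (a.2 - c.2) (a.1 - c.1)) → c ∈ G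

namespace MonotoneGraph

def pair (b : E × StrongDual ℝ E) : ℝ := b.2 b.1

noncomputable def halfSqNorm (b : E × StrongDual ℝ E) : ℝ := ‖b.1‖ ^ 2 / 2 + ‖b.2‖ ^ 2 / 2

/-- The Fitzpatrick function of `G` is `b ↦ ⨆ a ∈ G, fitzpatrickTerm a b`. -/
def fitzpatrickTerm (a b : E × StrongDual ℝ E) : ℝ := a.2 b.1 + b.2 a.1 - a.2 a.1

theorem pair_sub_fitzpatrickTerm (a b : E × StrongDual ℝ E) :
    pair b - fitzpatrickTerm a b = (a.2 - b.2) (a.1 - b.1) := by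
  simp only [pair, fitzpatrickTerm, sub_apply, map_sub]
  ring

theorem fitzpatrickTerm_self (a : E × StrongDual ℝ E) : fitzpatrickTerm a a = pair a := by
  simp only [fitzpatrickTerm, pair]
  ring

theorem halfSqNorm_add_pair_nonneg (b : E × StrongDual ℝ E) : 0 ≤ halfSqNorm b + pair b := by
  have := neg_le_of_abs_le (b.2.le_opNorm b.1)
  simp only [halfSqNorm, pair]
  nlinarith [sq_nonneg (‖b.1‖ - ‖b.2‖)]

theorem sq_norm_div_two_le_halfSqNorm (b : E × StrongDual ℝ E) :
    ‖b‖ ^ 2 / 2 ≤ halfSqNorm b := by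
  rw [Prod.norm_def, halfSqNorm]
  rcases le_total ‖b.1‖ ‖b.2‖ with h | h
  · rw [max_eq_right h]; nlinarith [sq_nonneg ‖b.1‖]
  · rw [max_eq_left h]; nlinarith [sq_nonneg ‖b.2‖]

theorem convexOn_halfSqNorm : ConvexOn ℝ univ (halfSqNorm (E := E)) :=
  (convexOn_sq_norm_div_two.comp_linearMap (LinearMap.fst ℝ E _)).add
    (convexOn_sq_norm_div_two.comp_linearMap (LinearMap.snd ℝ E _))

theorem continuous_halfSqNorm : Continuous (halfSqNorm (E := E)) := by
  unfold halfSqNorm; fun_prop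

theorem convexOn_fitzpatrickTerm (a : E × StrongDual ℝ E) :
    ConvexOn ℝ univ (fitzpatrickTerm a) :=
  ⟨convex_univ, fun x _ y _ s t _ _ hst => le_of_eq <| by
    simp only [fitzpatrickTerm, Prod.fst_add, Prod.snd_add, Prod.smul_fst, Prod.smul_snd,
      map_add, map_smul, smul_eq_mul, add_apply, smul_apply]
    linear_combination (a.2 a.1) * hst⟩

theorem continuous_fitzpatrickTerm (a : E × StrongDual ℝ E) :
    Continuous (fitzpatrickTerm a) := by
  unfold fitzpatrickTerm; fun_prop

theorem exists_halfSqNorm_le_apply_sub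
    (hE : Function.Surjective (NormedSpace.inclusionInDoubleDual ℝ E))
    (ℓ : StrongDual ℝ (E × StrongDual ℝ E)) :
    ∃ c : E × StrongDual ℝ E, (∀ a, ℓ a + pair a + pair c = (a.2 - c.2) (a.1 - c.1)) ∧
      ∃ b, halfSqNorm c ≤ ℓ b - halfSqNorm b := by
  set w' := ℓ.comp (.inl ℝ E (StrongDual ℝ E))
  obtain ⟨w, hw⟩ := hE (ℓ.comp (.inr ℝ E (StrongDual ℝ E)))
  have hℓ (b : E × StrongDual ℝ E) : ℓ b = w' b.1 + b.2 w := by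
    rw [← ℓ.comp_inl_add_comp_inr, ← hw, NormedSpace.dual_def]
  obtain ⟨x, hx, hw'x⟩ := NormedSpace.exists_norm_le_one_apply_eq_norm hE w'
  obtain ⟨g, hg, hgw⟩ := exists_dual_vector'' ℝ w
  refine ⟨(-w, -w'), fun a => ?_, (‖w'‖ • x, ‖w‖ • g), ?_⟩
  · simp only [hℓ, pair, sub_neg_eq_add, map_add, add_apply, map_neg, neg_apply, neg_neg]
    ring
  · have h₁ := sq_div_two_le_apply_smul_sub w' hx (norm_nonneg _) hw'x
    have h₂ := sq_div_two_le_apply_smul_sub (NormedSpace.inclusionInDoubleDual ℝ E w) hg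
      (norm_nonneg _) (by simpa using hgw)
    simp only [NormedSpace.dual_def] at h₂
    simp only [hℓ, halfSqNorm, norm_neg]
    linarith

def fitzpatrickSublevel (G : Set (E × StrongDual ℝ E)) (ε : ℝ) : Set (E × StrongDual ℝ E) :=
  {b | ∀ a ∈ G, fitzpatrickTerm a b + halfSqNorm b ≤ ε}

variable {G : Set (E × StrongDual ℝ E)}

theorem fitzpatrickSublevel_eq_biInter (G : Set (E × StrongDual ℝ E)) (ε : ℝ) :
    fitzpatrickSublevel G ε = ⋂ a ∈ G, {b | fitzpatrickTerm a b + halfSqNorm b ≤ ε} := by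
  ext; simp [fitzpatrickSublevel]

theorem convex_fitzpatrickSublevel (G : Set (E × StrongDual ℝ E)) (ε : ℝ) :
    Convex ℝ (fitzpatrickSublevel G ε) := by
  rw [fitzpatrickSublevel_eq_biInter]
  exact convex_iInter₂ fun a _ => by
    simpa using ((convexOn_fitzpatrickTerm a).add convexOn_halfSqNorm).convex_le ε

theorem isClosed_fitzpatrickSublevel (G : Set (E × StrongDual ℝ E)) (ε : ℝ) :
    IsClosed (fitzpatrickSublevel G ε) := by
  rw [fitzpatrickSublevel_eq_biInter]
  exact isClosed_biInter fun a _ =>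
    isClosed_le ((continuous_fitzpatrickTerm a).add continuous_halfSqNorm) continuous_const

theorem isBounded_fitzpatrickSublevel {a : E × StrongDual ℝ E} (ha : a ∈ G) (ε : ℝ) :
    Bornology.IsBounded (fitzpatrickSublevel G ε) := by
  refine isBounded_iff_forall_norm_le.2 ⟨4 * ‖a‖ + 2 * |ε + pair a| + 1, fun b hb => ?_⟩
  have hab : |a.2 b.1| ≤ ‖a‖ * ‖b‖ := (a.2.le_opNorm b.1).trans <|
    mul_le_mul (norm_snd_le a) (norm_fst_le b) (norm_nonneg _) (norm_nonneg _)
  have hba : |b.2 a.1| ≤ ‖a‖ * ‖b‖ := (b.2.le_opNorm a.1).trans <| by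
    rw [mul_comm]
    exact mul_le_mul (norm_fst_le a) (norm_snd_le b) (norm_nonneg _) (norm_nonneg _)
  have hb' := hb a ha
  have := sq_norm_div_two_le_halfSqNorm b
  simp only [fitzpatrickTerm, pair] at hb' ⊢
  by_contra! hlt
  have h1 : 1 ≤ ‖b‖ := by linarith [norm_nonneg a, abs_nonneg (ε + a.2 a.1)]
  nlinarith [abs_le.1 hab, abs_le.1 hba, le_abs_self (ε + a.2 a.1), norm_nonneg a,
    mul_lt_mul_of_pos_right hlt (by linarith : (0 : ℝ) < ‖b‖),
    mul_le_mul_of_nonneg_left h1 (abs_nonneg (ε + a.2 a.1))]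

theorem fitzpatrickSublevel_mono {ε δ : ℝ} (h : ε ≤ δ) :
    fitzpatrickSublevel G ε ⊆ fitzpatrickSublevel G δ :=
  fun _ hb a ha => (hb a ha).trans h

end MonotoneGraph

namespace IsMaximalMonotoneGraph

open MonotoneGraph

variable {G : Set (E × StrongDual ℝ E)}

theorem nonempty (hG : IsMaximalMonotoneGraph G) : G.Nonempty := by
  by_contra h
  exact h ⟨0, hG.2 0 fun a ha => (h ⟨a, ha⟩).elim⟩

theorem preimage_add_const (hG : IsMaximalMonotoneGraph G) (c : E × StrongDual ℝ E) :
    IsMaximalMonotoneGraph ((· + c) ⁻¹' G) := by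
  refine ⟨fun a ha b hb => by simpa using hG.1 _ ha _ hb, fun d hd => hG.2 _ fun a ha => ?_⟩
  have h := hd (a - c) (by simpa using ha)
  rwa [← Prod.fst_sub, ← Prod.snd_sub, sub_sub, add_comm] at h

theorem nonempty_fitzpatrickSublevel
    (hE : Function.Surjective (NormedSpace.inclusionInDoubleDual ℝ E))
    (hG : IsMaximalMonotoneGraph G) {ε : ℝ} (hε : 0 < ε) :
    (fitzpatrickSublevel G ε).Nonempty := by
  by_contra hempty
  let A := {p : (E × StrongDual ℝ E) × ℝ | ∀ a ∈ G, fitzpatrickTerm a p.1 ≤ p.2}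
  have hA : Convex ℝ A := by
    have : A = ⋂ a ∈ G, {p | p.1 ∈ univ ∧ fitzpatrickTerm a p.1 ≤ p.2} := by ext; simp [A]
    rw [this]
    exact convex_iInter₂ fun a _ => (convexOn_fitzpatrickTerm a).convex_epigraph
  have hGA : ∀ a ∈ G, (a, pair a) ∈ A := fun a ha a' ha' => by
    linarith [pair_sub_fitzpatrickTerm a' a, hG.1 a' ha' a ha]
  have hAh : ∀ p ∈ A, ε - halfSqNorm p.1 ≤ p.2 := fun p hp => by
    have hp₁ : p.1 ∉ fitzpatrickSublevel G ε := fun h => hempty ⟨p.1, h⟩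
    simp only [fitzpatrickSublevel, mem_ofPred_eq, not_forall, not_le] at hp₁
    obtain ⟨a, ha, hlt⟩ := hp₁
    linarith [hp a ha]
  obtain ⟨a₀, ha₀⟩ := hG.nonempty
  have hconc : ConcaveOn ℝ univ fun b : E × StrongDual ℝ E => ε - halfSqNorm b :=
    (concaveOn_const ε convex_univ).sub convexOn_halfSqNorm
  obtain ⟨ℓ, u, hℓ, hu⟩ := hconc.exists_strongDual_add_le_of_le
    (continuous_const.sub continuous_halfSqNorm) hA ⟨_, hGA a₀ ha₀⟩ hAh
  obtain ⟨c, hc, b, hb⟩ := exists_halfSqNorm_le_apply_sub hE ℓ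
  have hmargin : ∀ a ∈ G, ε ≤ (a.2 - c.2) (a.1 - c.1) := fun a ha => by
    linarith [hℓ b, hu _ (hGA a ha), hc a, halfSqNorm_add_pair_nonneg c]
  have hcG : c ∈ G := hG.2 c fun a ha => hε.le.trans (hmargin a ha)
  exact absurd (hmargin c hcG) (by simpa using hε)

theorem exists_mem_halfSqNorm_add_pair_nonpos
    (hE : Function.Surjective (NormedSpace.inclusionInDoubleDual ℝ E))
    (hG : IsMaximalMonotoneGraph G) :
    ∃ b ∈ G, halfSqNorm b + pair b ≤ 0 := by
  obtain ⟨a₀, ha₀⟩ := hG.nonempty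
  obtain ⟨b, hb⟩ := NormedSpace.nonempty_iInter_of_convex_of_isClosed_of_isBounded
    (NormedSpace.surjective_inclusionInDoubleDual_prod hE
      (NormedSpace.surjective_inclusionInDoubleDual_strongDual hE))
    (fun n => fitzpatrickSublevel G (1 / (n + 1)))
    (fun n => fitzpatrickSublevel_mono (by gcongr; linarith))
    (fun n => hG.nonempty_fitzpatrickSublevel hE (by positivity))
    (isBounded_fitzpatrickSublevel ha₀ _)
    (fun n => isClosed_fitzpatrickSublevel G _) (fun n => convex_fitzpatrickSublevel G _)
  have hb0 : b ∈ fitzpatrickSublevel G 0 := fun a ha => by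
    refine le_of_forall_pos_lt_add fun δ hδ => ?_
    obtain ⟨n, hn⟩ := exists_nat_one_div_lt hδ
    linarith [mem_iInter.1 hb n a ha]
  have hbG : b ∈ G := hG.2 b fun a ha => by
    linarith [hb0 a ha, pair_sub_fitzpatrickTerm a b, halfSqNorm_add_pair_nonneg b]
  refine ⟨b, hbG, ?_⟩
  simpa [fitzpatrickTerm_self, add_comm] using hb0 b hbG

end IsMaximalMonotoneGraph

end

theorem stmt17_general {E : Type*} [NormedAddCommGroup E] [NormedSpace ℝ E]
    (hrefl : Function.Surjective (NormedSpace.inclusionInDoubleDual ℝ E))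
    (G : Set (E × StrongDual ℝ E))
    (hmono : ∀ a ∈ G, ∀ b ∈ G, 0 ≤ (a.2 - b.2) (a.1 - b.1))
    (hmax : ∀ c : E × StrongDual ℝ E,
      (∀ a ∈ G, 0 ≤ (a.2 - c.2) (a.1 - c.1)) → c ∈ G) :
    ∀ c : E × StrongDual ℝ E,
      (⨅ a ∈ G, ((‖a.1 - c.1‖ ^ 2 / 2 + ‖a.2 - c.2‖ ^ 2 / 2
        + (a.2 - c.2) (a.1 - c.1) : ℝ) : EReal)) ≤ 0 := by
  intro c
  obtain ⟨b, hb, hb0⟩ := (IsMaximalMonotoneGraph.preimage_add_const ⟨hmono, hmax⟩ c)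
    |>.exists_mem_halfSqNorm_add_pair_nonpos hrefl
  refine (iInf₂_le (b + c) hb).trans (EReal.coe_nonpos.2 ?_)
  simpa [MonotoneGraph.halfSqNorm, MonotoneGraph.pair] using hb0

theorem stmt17 {E : Type*} [NormedAddCommGroup E] [NormedSpace ℝ E] [CompleteSpace E]
    [Nontrivial E]
    (hrefl : Function.Surjective (NormedSpace.inclusionInDoubleDual ℝ E))
    (G : Set (E × StrongDual ℝ E))
    (hmono : ∀ a ∈ G, ∀ b ∈ G, 0 ≤ (a.2 - b.2) (a.1 - b.1))
    (hmax : ∀ c : E × StrongDual ℝ E,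
      (∀ a ∈ G, 0 ≤ (a.2 - c.2) (a.1 - c.1)) → c ∈ G) :
    ∀ c : E × StrongDual ℝ E,
      (⨅ a ∈ G, ((‖a.1 - c.1‖ ^ 2 / 2 + ‖a.2 - c.2‖ ^ 2 / 2
        + (a.2 - c.2) (a.1 - c.1) : ℝ) : EReal)) ≤ 0 :=
  stmt17_general hrefl G hmono hmax
end

section
/- Let T : E → E* be a linear (everywhere defined, not necessarily continuous) monotone map on a real Banach space E, i.e., ⟨x, Tx⟩ ≥ 0 for all x ∈ E. Then T is maximally monotone: if (y,y*) ∈ E × E* satisfies ⟨x − y, Tx − y*⟩ ≥ 0 for all x ∈ E, then y* = Ty. -/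
/-!
Testing the hypothesis at `x = y + t • z` and dividing by `t > 0` gives
`0 ≤ (T y - y') z + t * T z z`; letting `t → 0⁺` yields `0 ≤ (T y - y') z` for every `z`,
and applying this to `z` and `-z` forces `y' = T y`.
-/

open Filter Topology

lemma nonneg_of_forall_pos_nonneg_add_mul {c a : ℝ} (h : ∀ t > 0, 0 ≤ c + t * a) : 0 ≤ c := by
  have hlim : Tendsto (fun t : ℝ => c + t * a) (𝓝[>] 0) (𝓝 c) := by
    have : Tendsto (fun t : ℝ => c + t * a) (𝓝 0) (𝓝 (c + 0 * a)) :=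
      (continuous_const.add (continuous_id.mul continuous_const)).tendsto 0
    simpa using this.mono_left nhdsWithin_le_nhds
  exact ge_of_tendsto hlim (eventually_nhdsWithin_of_forall fun t ht => h t ht)

lemma sub_apply_nonneg_of_forall_nonneg_sub_apply_sub {E : Type*} [AddCommGroup E] [Module ℝ E]
    [TopologicalSpace E] (T : E →ₗ[ℝ] StrongDual ℝ E) {y : E} {y' : StrongDual ℝ E}
    (h : ∀ x : E, 0 ≤ (T x - y') (x - y)) (z : E) : 0 ≤ (T y - y') z := by
  refine nonneg_of_forall_pos_nonneg_add_mul (a := T z z) fun t ht => ?_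
  have hyz : (T (y + t • z) - y') (y + t • z - y) = t * ((T y - y') z + t * T z z) := by
    simp only [map_add, map_smul, add_sub_cancel_left, sub_apply,
      add_apply, smul_apply, smul_eq_mul]
    ring
  have hxt := h (y + t • z)
  rw [hyz] at hxt
  exact nonneg_of_mul_nonneg_right (by linarith) ht

theorem stmt18_general {E : Type*} [NormedAddCommGroup E] [NormedSpace ℝ E]
    (T : E →ₗ[ℝ] StrongDual ℝ E)
    (y : E) (y' : StrongDual ℝ E)
    (h : ∀ x : E, 0 ≤ (T x - y') (x - y)) :
    y' = T y := by
  ext z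
  have hz := sub_apply_nonneg_of_forall_nonneg_sub_apply_sub T h z
  have hnz := sub_apply_nonneg_of_forall_nonneg_sub_apply_sub T h (-z)
  rw [map_neg] at hnz
  simp only [sub_apply] at hz hnz
  linarith

theorem stmt18 {E : Type*} [NormedAddCommGroup E] [NormedSpace ℝ E] [CompleteSpace E]
    [Nontrivial E]
    (T : E →ₗ[ℝ] StrongDual ℝ E)
    (hmono : ∀ x : E, 0 ≤ T x x)
    (y : E) (y' : StrongDual ℝ E)
    (h : ∀ x : E, 0 ≤ (T x - y') (x - y)) :
    y' = T y :=
  stmt18_general T y y' h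
end

section
/- Define the tail map T : ℓ¹ → ℓ^∞ by (Tx*)_j = τ_j + τ_{j+1} where τ_j = Σ_{i≥j} x*_i. Then for all x* ∈ ℓ¹, ⟨x*, Tx*⟩ = Σ_{j≥1} x*_j (Tx*)_j = (Σ_{i≥1} x*_i)² ≥ 0; in particular T is monotone. -/
theorem stmt19 (x : ℕ → ℝ) (hx : Summable fun i => |x i|)
    (τ : ℕ → ℝ) (hτ : ∀ j, τ j = ∑' i : ℕ, if j ≤ i then x i else 0) :
    (∑' j : ℕ, x j * (τ j + τ (j + 1))) = (∑' i : ℕ, x i) ^ 2 ∧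
    0 ≤ ∑' j : ℕ, x j * (τ j + τ (j + 1)) := by
  have hxs : Summable x := hx.of_abs
  -- summability of the truncated sequences
  have hsum : ∀ j, Summable (fun i => if j ≤ i then x i else 0) := by
    intro j
    have : (fun i => if j ≤ i then x i else 0) = Set.indicator {i | j ≤ i} x := by
      funext i
      simp [Set.indicator_apply, Set.mem_setOf_eq]
    rw [this]
    exact hxs.indicator _
  -- step: τ j = x j + τ (j+1)
  have hstep : ∀ j, τ j = x j + τ (j + 1) := by
    intro j
    rw [hτ j, hτ (j + 1)]
    rw [Summable.tsum_eq_add_tsum_ite (hsum j) j]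
    simp only [le_refl, if_true]
    congr 1
    apply tsum_congr
    intro i
    rcases eq_or_ne i j with rfl | hij
    · simp
    · have : (j ≤ i) ↔ (j + 1 ≤ i) := by omega
      simp [hij, this]
  -- τ j = total - partial sum
  have hτ0 : τ 0 = ∑' i, x i := by
    rw [hτ 0]; apply tsum_congr; intro i; simp
  have hpartial : ∀ j, τ j = (∑' i, x i) - ∑ i ∈ Finset.range j, x i := by
    intro j
    induction j with
    | zero => simp [hτ0]
    | succ n ih =>
      have := hstep n
      rw [Finset.sum_range_succ]
      have : τ (n + 1) = τ n - x n := by linarith [hstep n]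
      rw [this, ih]; ring
  -- τ tends to 0
  have hτ0lim : Filter.Tendsto τ Filter.atTop (nhds 0) := by
    have h1 : Filter.Tendsto (fun j => ∑ i ∈ Finset.range j, x i)
        Filter.atTop (nhds (∑' i, x i)) := hxs.hasSum.tendsto_sum_nat
    have h2 : Filter.Tendsto (fun j => (∑' i, x i) - ∑ i ∈ Finset.range j, x i)
        Filter.atTop (nhds 0) := by
      simpa using Filter.Tendsto.sub (tendsto_const_nhds (x := ∑' i, x i)) h1
    have hτeq : τ = fun j => (∑' i, x i) - ∑ i ∈ Finset.range j, x i := funext hpartial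
    rw [hτeq]; exact h2
  -- telescoping identity for partial sums
  have htel : ∀ n, ∑ j ∈ Finset.range n, x j * (τ j + τ (j + 1)) = τ 0 ^ 2 - τ n ^ 2 := by
    intro n
    induction n with
    | zero => simp
    | succ m ih =>
      rw [Finset.sum_range_succ, ih]
      have hx' : x m = τ m - τ (m + 1) := by linarith [hstep m]
      rw [hx']; ring
  -- bound on τ
  have hbound : ∀ j, |τ j| ≤ ∑' i, |x i| := by
    intro j
    rw [hτ j]
    calc |∑' i, if j ≤ i then x i else 0| ≤ ∑' i, |if j ≤ i then x i else 0| := by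
          simpa [Real.norm_eq_abs] using norm_tsum_le_tsum_norm (f := fun i => if j ≤ i then x i else 0) (by simpa [Real.norm_eq_abs] using (hsum j).abs)
      _ ≤ ∑' i, |x i| := by
          apply Summable.tsum_le_tsum _ _ hx
          · intro i; split <;> simp [abs_nonneg]
          · exact (hsum j).abs
  -- summability of the main series
  have hg : Summable (fun j => x j * (τ j + τ (j + 1))) := by
    apply Summable.of_abs
    refine Summable.of_nonneg_of_le (fun j => abs_nonneg _) (fun j => ?_) (hx.mul_right (2 * ∑' i, |x i|))
    rw [abs_mul]
    apply mul_le_mul_of_nonneg_left _ (abs_nonneg _)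
    calc |τ j + τ (j + 1)| ≤ |τ j| + |τ (j + 1)| := abs_add_le _ _
      _ ≤ 2 * ∑' i, |x i| := by linarith [hbound j, hbound (j + 1)]
  -- compute the tsum via partial sums
  have hlim : Filter.Tendsto (fun n => ∑ j ∈ Finset.range n, x j * (τ j + τ (j + 1)))
      Filter.atTop (nhds (τ 0 ^ 2)) := by
    simp only [htel]
    have : Filter.Tendsto (fun n => τ 0 ^ 2 - τ n ^ 2) Filter.atTop
        (nhds (τ 0 ^ 2 - 0 ^ 2)) :=
      Filter.Tendsto.sub tendsto_const_nhds ((hτ0lim.pow 2))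
    simpa using this
  have hmain : (∑' j : ℕ, x j * (τ j + τ (j + 1))) = τ 0 ^ 2 :=
    tendsto_nhds_unique hg.hasSum.tendsto_sum_nat hlim
  rw [hmain, hτ0]
  exact ⟨rfl, sq_nonneg _⟩
end
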